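/- arXiv:2306.16771 — 2 statements merged into one kernel-verified Lean document; each statement's English description precedes it below -/
import Mathlib

section
/- For a k-uniform hypertree T with vertex u and p in the variety defined by the eigenvalue equations with x_u = 1, all of whose coordinates are nonzero, one has λ − Σ_{e ∈ E_u} p_{e∖{u}} = φ_T(λ)/φ_{T−u}(λ), where p_{e∖{u}} = Π_{v ∈ e∖{u}} p_v. -/
/-- A set of edges is a matching if its edges are pairwise disjoint. -/
def IsHyperMatching {γ : Type*} (M : Finset (Finset γ)) : Prop :=
  ∀ e ∈ M, ∀ f ∈ M, e ≠ f → Disjoint e f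

open Classical in
/-- `mCount E t` is the number of `t`-matchings of the hypergraph with edge set `E`. -/
noncomputable def mCount {γ : Type*} (E : Finset (Finset γ)) (t : ℕ) : ℕ :=
  (E.powerset.filter (fun M => M.card = t ∧ IsHyperMatching M)).card

/-- The matching polynomial `φ_H(λ) = ∑_t (-1)^t m_t(H) λ^(n - t k)` evaluated at `z : ℂ`. -/
noncomputable def mPolyC {γ : Type*} (n k : ℕ) (E : Finset (Finset γ)) (z : ℂ) : ℂ :=
  ∑ t ∈ Finset.range (E.card + 1), (-1 : ℂ) ^ t * (mCount E t : ℂ) * z ^ (n - t * k)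

/-- A `k`-uniform hypertree on vertex set `V` with edge set `E`. -/
inductive IsHypertree {α : Type*} [DecidableEq α] (k : ℕ) : Finset α → Finset (Finset α) → Prop
  | single (v : α) : IsHypertree k {v} ∅
  | attach {V : Finset α} {E : Finset (Finset α)} (e : Finset α) :
      IsHypertree k V E → e.card = k → (e ∩ V).card = 1 →
      IsHypertree k (V ∪ e) (insert e E)
open Classical
section B
variable {γ : Type*} [DecidableEq γ]

lemma mCount_zero (E : Finset (Finset γ)) : mCount E 0 = 1 := by
  classical
  unfold mCount
  have : E.powerset.filter (fun M => M.card = 0 ∧ IsHyperMatching M) = {∅} := by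
    ext M
    simp only [Finset.mem_filter, Finset.mem_powerset, Finset.mem_singleton,
      Finset.card_eq_zero]
    constructor
    · rintro ⟨-, rfl, -⟩; rfl
    · rintro rfl
      refine ⟨Finset.empty_subset _, rfl, ?_⟩
      intro e he; simp at he
  rw [this]; simp

lemma mCount_eq_zero_of_lt (E : Finset (Finset γ)) {t : ℕ} (h : E.card < t) :
    mCount E t = 0 := by
  classical
  unfold mCount
  rw [Finset.card_eq_zero, Finset.filter_eq_empty_iff]
  rintro M hM ⟨hc, -⟩
  rw [Finset.mem_powerset] at hM
  exact absurd (Finset.card_le_card hM) (by omega)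

lemma mCount_bound {V : Finset γ} {E : Finset (Finset γ)} {k t : ℕ}
    (hE : ∀ h ∈ E, h ⊆ V ∧ h.card = k) (h : mCount E t ≠ 0) : t * k ≤ V.card := by
  classical
  unfold mCount at h
  obtain ⟨M, hM⟩ := Finset.card_ne_zero.mp h
  simp only [Finset.mem_filter, Finset.mem_powerset] at hM
  obtain ⟨hMe, hMc, hMm⟩ := hM
  have hdisj : ∀ x ∈ M, ∀ y ∈ M, x ≠ y → Disjoint (id x) (id y) := by
    intro x hx y hy hxy; exact hMm x hx y hy hxy
  have h1 : (M.biUnion id).card = ∑ e ∈ M, e.card := Finset.card_biUnion hdisj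
  have h2 : ∑ e ∈ M, e.card = t * k := by
    rw [Finset.sum_congr rfl (fun e he => (hE e (hMe he)).2)]
    simp [hMc, mul_comm]
  have h3 : M.biUnion id ⊆ V := by
    intro x hx; rw [Finset.mem_biUnion] at hx
    obtain ⟨e, he, hxe⟩ := hx
    exact (hE e (hMe he)).1 hxe
  calc t * k = (M.biUnion id).card := by rw [h1, h2]
    _ ≤ V.card := Finset.card_le_card h3

end B
open Classical
section B2
variable {γ : Type*} [DecidableEq γ]

lemma IsHyperMatching.subset {M M' : Finset (Finset γ)} (h : IsHyperMatching M)
    (hs : M' ⊆ M) : IsHyperMatching M' :=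
  fun e he f hf hef => h e (hs he) f (hs hf) hef

lemma mCount_union {E₁ E₂ : Finset (Finset γ)}
    (hd : ∀ e₁ ∈ E₁, ∀ e₂ ∈ E₂, Disjoint e₁ e₂) (hne : Disjoint E₁ E₂) (t : ℕ) :
    mCount (E₁ ∪ E₂) t
      = ∑ ab ∈ Finset.HasAntidiagonal.antidiagonal t, mCount E₁ ab.1 * mCount E₂ ab.2 := by
  classical
  set filt : Finset (Finset γ) → ℕ → Finset (Finset (Finset γ)) :=
    fun E a => E.powerset.filter (fun M => M.card = a ∧ IsHyperMatching M) with hfilt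
  have hrhs : ∀ ab : ℕ × ℕ, mCount E₁ ab.1 * mCount E₂ ab.2
      = ((filt E₁ ab.1) ×ˢ (filt E₂ ab.2)).card := by
    intro ab; rw [Finset.card_product]; rfl
  rw [Finset.sum_congr rfl (fun ab _ => hrhs ab)]
  rw [← Finset.card_sigma]
  show (filt (E₁ ∪ E₂) t).card = _
  apply Finset.card_bij'
    (i := fun M _ => (⟨((M ∩ E₁).card, (M ∩ E₂).card), (M ∩ E₁, M ∩ E₂)⟩ :
      (_ : ℕ × ℕ) × (Finset (Finset γ) × Finset (Finset γ))))
    (j := fun x _ => x.2.1 ∪ x.2.2)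
  · -- hi : image lands in sigma set
    intro M hM
    simp only [hfilt, Finset.mem_filter, Finset.mem_powerset] at hM
    obtain ⟨hMe, hMc, hMm⟩ := hM
    have hsplit : M ∩ E₁ ∪ M ∩ E₂ = M := by
      rw [← Finset.inter_union_distrib_left, Finset.inter_eq_left.mpr hMe]
    have hdisj : Disjoint (M ∩ E₁) (M ∩ E₂) :=
      hne.mono (Finset.inter_subset_right) (Finset.inter_subset_right)
    simp only [Finset.mem_sigma, Finset.HasAntidiagonal.mem_antidiagonal, Finset.mem_product,
      hfilt, Finset.mem_filter, Finset.mem_powerset]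
    refine ⟨?_, ⟨Finset.inter_subset_right, trivial, hMm.subset Finset.inter_subset_left⟩,
      ⟨Finset.inter_subset_right, trivial, hMm.subset Finset.inter_subset_left⟩⟩
    rw [← Finset.card_union_of_disjoint hdisj, hsplit, hMc]
  · -- hj
    intro x hx
    simp only [Finset.mem_sigma, Finset.HasAntidiagonal.mem_antidiagonal, Finset.mem_product,
      hfilt, Finset.mem_filter, Finset.mem_powerset] at hx
    obtain ⟨hab, ⟨h1e, h1c, h1m⟩, ⟨h2e, h2c, h2m⟩⟩ := hx
    simp only [hfilt, Finset.mem_filter, Finset.mem_powerset]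
    have hdisj : Disjoint x.2.1 x.2.2 := hne.mono h1e h2e
    refine ⟨Finset.union_subset_union h1e h2e, ?_, ?_⟩
    · rw [Finset.card_union_of_disjoint hdisj, h1c, h2c, hab]
    · intro e he f hf hef
      rw [Finset.mem_union] at he hf
      rcases he with he | he <;> rcases hf with hf | hf
      · exact h1m e he f hf hef
      · exact hd e (h1e he) f (h2e hf)
      · exact (hd f (h1e hf) e (h2e he)).symm
      · exact h2m e he f hf hef
  · -- left inverse
    intro M hM
    simp only [hfilt, Finset.mem_filter, Finset.mem_powerset] at hM
    rw [← Finset.inter_union_distrib_left, Finset.inter_eq_left.mpr hM.1]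
  · -- right inverse
    intro x hx
    simp only [Finset.mem_sigma, Finset.HasAntidiagonal.mem_antidiagonal, Finset.mem_product,
      hfilt, Finset.mem_filter, Finset.mem_powerset] at hx
    obtain ⟨hab, ⟨h1e, h1c, h1m⟩, ⟨h2e, h2c, h2m⟩⟩ := hx
    have e1 : (x.2.1 ∪ x.2.2) ∩ E₁ = x.2.1 := by
      rw [Finset.union_inter_distrib_right, Finset.inter_eq_left.mpr h1e,
        Finset.disjoint_iff_inter_eq_empty.mp
          (Finset.disjoint_left.mpr (fun a ha => (Finset.disjoint_right.mp hne) (h2e ha)))]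
      exact Finset.union_empty _
    have e2 : (x.2.1 ∪ x.2.2) ∩ E₂ = x.2.2 := by
      rw [Finset.union_inter_distrib_right, Finset.inter_eq_left.mpr h2e]
      rw [Finset.disjoint_iff_inter_eq_empty.mp
        (Finset.disjoint_left.mpr (fun a ha => (Finset.disjoint_left.mp hne (h1e ha))))]
      exact Finset.empty_union _
    obtain ⟨⟨a, b⟩, ⟨M₁, M₂⟩⟩ := x
    simp only at e1 e2 h1c h2c ⊢
    subst h1c h2c
    simp [e1, e2]

end B2
open Classical
section B3
variable {γ : Type*} [DecidableEq γ]

lemma mPolyC_eq_sum_range {n k : ℕ} {E : Finset (Finset γ)} (z : ℂ) {m : ℕ}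
    (hm : E.card ≤ m) :
    mPolyC n k E z
      = ∑ t ∈ Finset.range (m + 1), (-1 : ℂ) ^ t * (mCount E t : ℂ) * z ^ (n - t * k) := by
  unfold mPolyC
  apply Finset.sum_subset
  · exact Finset.range_subset_range.mpr (by omega)
  · intro t ht hnt
    rw [Finset.mem_range] at ht hnt
    rw [mCount_eq_zero_of_lt E (by omega)]
    simp

lemma mPolyC_empty (n k : ℕ) (z : ℂ) : mPolyC n k (∅ : Finset (Finset γ)) z = z ^ n := by
  unfold mPolyC
  simp [mCount_zero]

lemma mPolyC_union {k n₁ n₂ : ℕ} {E₁ E₂ : Finset (Finset γ)} (z : ℂ)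
    (hd : ∀ e₁ ∈ E₁, ∀ e₂ ∈ E₂, Disjoint e₁ e₂) (hne : Disjoint E₁ E₂)
    (hb₁ : ∀ t, mCount E₁ t ≠ 0 → t * k ≤ n₁)
    (hb₂ : ∀ t, mCount E₂ t ≠ 0 → t * k ≤ n₂) :
    mPolyC (n₁ + n₂) k (E₁ ∪ E₂) z = mPolyC n₁ k E₁ z * mPolyC n₂ k E₂ z := by
  classical
  set A := E₁.card
  set B := E₂.card
  set N := A + B with hN
  have hcard : (E₁ ∪ E₂).card = N := Finset.card_union_of_disjoint hne
  set W : ℕ × ℕ → ℂ := fun p =>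
    (-1 : ℂ) ^ (p.1 + p.2) * ((mCount E₁ p.1 * mCount E₂ p.2 : ℕ) : ℂ)
      * z ^ (n₁ + n₂ - (p.1 + p.2) * k) with hW
  have hWzero : ∀ p : ℕ × ℕ, (A < p.1 ∨ B < p.2) → W p = 0 := by
    intro p hp
    rcases hp with hp | hp
    · simp [hW, mCount_eq_zero_of_lt E₁ hp]
    · simp [hW, mCount_eq_zero_of_lt E₂ hp]
  have step1 : mPolyC (n₁ + n₂) k (E₁ ∪ E₂) z
      = ∑ t ∈ Finset.range (N + 1), ∑ p ∈ Finset.HasAntidiagonal.antidiagonal t, W p := by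
    unfold mPolyC
    rw [hcard]
    apply Finset.sum_congr rfl
    intro t ht
    rw [mCount_union hd hne t, Nat.cast_sum, Finset.mul_sum, Finset.sum_mul]
    apply Finset.sum_congr rfl
    intro p hp
    rw [Finset.HasAntidiagonal.mem_antidiagonal] at hp
    rw [hW, ← hp]
  have step2 : ∑ t ∈ Finset.range (N + 1), ∑ p ∈ Finset.HasAntidiagonal.antidiagonal t, W p
      = ∑ p ∈ (Finset.range (N + 1) ×ˢ Finset.range (N + 1)).filter
          (fun p => p.1 + p.2 ≤ N), W p := by
    rw [← Finset.sum_biUnion]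
    · apply Finset.sum_congr _ (fun _ _ => rfl)
      ext p
      simp only [Finset.mem_biUnion, Finset.mem_range, Finset.HasAntidiagonal.mem_antidiagonal,
        Finset.mem_filter, Finset.mem_product]
      constructor
      · rintro ⟨t, ht, rfl⟩; omega
      · intro h; exact ⟨p.1 + p.2, by omega, rfl⟩
    · intro s hs t ht hst
      apply Finset.disjoint_left.mpr
      intro p hps hpt
      rw [Finset.HasAntidiagonal.mem_antidiagonal] at hps hpt
      exact hst (by omega)
  have step3 : ∑ p ∈ (Finset.range (N + 1) ×ˢ Finset.range (N + 1)).filter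
        (fun p => p.1 + p.2 ≤ N), W p
      = ∑ p ∈ Finset.range (N + 1) ×ˢ Finset.range (N + 1), W p := by
    apply Finset.sum_filter_of_ne
    intro p hp hWp
    by_contra hc
    rw [Finset.mem_product, Finset.mem_range, Finset.mem_range] at hp
    exact hWp (hWzero p (by omega))
  have step4 : ∑ p ∈ Finset.range (N + 1) ×ˢ Finset.range (N + 1), W p
      = ∑ p ∈ Finset.range (A + 1) ×ˢ Finset.range (B + 1), W p := by
    symm
    apply Finset.sum_subset
    · intro p hp
      rw [Finset.mem_product, Finset.mem_range, Finset.mem_range] at hp ⊢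
      omega
    · intro p hp hnp
      rw [Finset.mem_product, Finset.mem_range, Finset.mem_range] at hp hnp
      exact hWzero p (by omega)
  rw [step1, step2, step3, step4]
  rw [Finset.sum_product]
  show _ = mPolyC n₁ k E₁ z * mPolyC n₂ k E₂ z
  unfold mPolyC
  rw [Finset.sum_mul_sum]
  apply Finset.sum_congr rfl
  intro a ha
  apply Finset.sum_congr rfl
  intro b hb
  by_cases h1 : mCount E₁ a = 0
  · simp [hW, h1]
  by_cases h2 : mCount E₂ b = 0
  · simp [hW, h2]
  have hka := hb₁ a h1
  have hkb := hb₂ b h2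
  have hexp : n₁ + n₂ - (a + b) * k = (n₁ - a * k) + (n₂ - b * k) := by
    rw [add_mul]; omega
  rw [hW]
  simp only []
  rw [hexp, pow_add, pow_add]
  push_cast
  ring
end B3
open Classical
section B4
variable {γ : Type*} [DecidableEq γ]

lemma mCount_vertex_rec (E : Finset (Finset γ)) (u : γ) (t : ℕ) :
    mCount E (t + 1)
      = mCount (E.filter (fun e => u ∉ e)) (t + 1)
        + ∑ f ∈ E.filter (fun e => u ∈ e),
            mCount (E.filter (fun h => Disjoint h f)) t := by
  classical
  set filt : Finset (Finset γ) → ℕ → Finset (Finset (Finset γ)) :=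
    fun E a => E.powerset.filter (fun M => M.card = a ∧ IsHyperMatching M) with hfilt
  set S := filt E (t + 1) with hS
  set P : Finset (Finset γ) → Prop := fun M => ∀ e ∈ M, u ∉ e with hP
  have h0 : (S.filter P).card + (S.filter (fun M => ¬ P M)).card = S.card :=
    Finset.card_filter_add_card_filter_not (fun M => P M)
  have h1 : S.filter P = filt (E.filter (fun e => u ∉ e)) (t + 1) := by
    ext M
    simp only [hS, hP, hfilt, Finset.mem_filter, Finset.mem_powerset, Finset.subset_iff,
      Finset.mem_filter]
    constructor
    · rintro ⟨⟨hME, hc, hm⟩, hp⟩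
      exact ⟨fun e he => ⟨hME he, hp e he⟩, hc, hm⟩
    · rintro ⟨hME, hc, hm⟩
      exact ⟨⟨fun e he => (hME he).1, hc, hm⟩, fun e he => (hME he).2⟩
  have h2 : S.filter (fun M => ¬ P M)
      = (E.filter (fun e => u ∈ e)).biUnion (fun f => S.filter (fun M => f ∈ M)) := by
    ext M
    simp only [hP, Finset.mem_filter, Finset.mem_biUnion, not_forall]
    constructor
    · rintro ⟨hMS, f, hfM, huf⟩
      rw [not_not] at huf
      have hME : M ⊆ E := by
        have := hMS; rw [hS, hfilt, Finset.mem_filter, Finset.mem_powerset] at this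
        exact this.1
      exact ⟨f, ⟨hME hfM, huf⟩, hMS, hfM⟩
    · rintro ⟨f, ⟨hfE, huf⟩, hMS, hfM⟩
      exact ⟨hMS, f, hfM, not_not_intro huf⟩
  have h3 : ((E.filter (fun e => u ∈ e)).biUnion (fun f => S.filter (fun M => f ∈ M))).card
      = ∑ f ∈ E.filter (fun e => u ∈ e), (S.filter (fun M => f ∈ M)).card := by
    apply Finset.card_biUnion
    intro f hf g hg hfg
    rw [Finset.mem_coe, Finset.mem_filter] at hf hg
    apply Finset.disjoint_left.mpr
    intro M hMf hMg
    rw [Finset.mem_filter] at hMf hMg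
    have hmm : IsHyperMatching M := by
      have := hMf.1; rw [hS, hfilt, Finset.mem_filter] at this; exact this.2.2
    exact Finset.disjoint_left.mp (hmm f hMf.2 g hMg.2 hfg) hf.2 hg.2
  have h4 : ∀ f ∈ E.filter (fun e => u ∈ e),
      (S.filter (fun M => f ∈ M)).card = mCount (E.filter (fun h => Disjoint h f)) t := by
    intro f hf
    rw [Finset.mem_filter] at hf
    obtain ⟨hfE, huf⟩ := hf
    have hfne : f.Nonempty := ⟨u, huf⟩
    show _ = (filt (E.filter (fun h => Disjoint h f)) t).card
    refine Finset.card_bij' (fun M _ => M.erase f) (fun M' _ => insert f M')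
      ?hi ?hj ?li ?ri
    case hi =>
      intro M hM
      simp only [hS, hfilt, Finset.mem_filter, Finset.mem_powerset] at hM
      obtain ⟨⟨hME, hMc, hMm⟩, hfM⟩ := hM
      simp only [hfilt, Finset.mem_filter, Finset.mem_powerset]
      refine ⟨?_, ?_, hMm.subset (Finset.erase_subset _ _)⟩
      · intro e he
        rw [Finset.mem_erase] at he
        rw [Finset.mem_filter]
        exact ⟨hME he.2, hMm e he.2 f hfM he.1⟩
      · rw [Finset.card_erase_of_mem hfM, hMc]
        omega
    case hj =>
      intro M' hM'
      simp only [hfilt, Finset.mem_filter, Finset.mem_powerset] at hM'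
      obtain ⟨hM'E, hM'c, hM'm⟩ := hM'
      have hfM' : f ∉ M' := by
        intro h
        have := (Finset.mem_filter.mp (hM'E h)).2
        exact hfne.ne_empty ((Finset.disjoint_self_iff_empty _).mp this)
      simp only [hS, hfilt, Finset.mem_filter, Finset.mem_powerset]
      refine ⟨⟨?_, ?_, ?_⟩, Finset.mem_insert_self _ _⟩
      · intro e he
        rw [Finset.mem_insert] at he
        rcases he with rfl | he
        · exact hfE
        · exact (Finset.mem_filter.mp (hM'E he)).1
      · rw [Finset.card_insert_of_notMem hfM', hM'c]
      · intro e he g hg heg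
        rw [Finset.mem_insert] at he hg
        rcases he with rfl | he <;> rcases hg with rfl | hg
        · exact absurd rfl heg
        · exact ((Finset.mem_filter.mp (hM'E hg)).2).symm
        · exact (Finset.mem_filter.mp (hM'E he)).2
        · exact hM'm e he g hg heg
    case li =>
      intro M hM
      simp only [hS, hfilt, Finset.mem_filter, Finset.mem_powerset] at hM
      exact Finset.insert_erase hM.2
    case ri =>
      intro M' hM'
      simp only [hfilt, Finset.mem_filter, Finset.mem_powerset] at hM'
      apply Finset.erase_insert
      intro h
      have := (Finset.mem_filter.mp (hM'.1 h)).2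
      exact (Finset.nonempty_iff_ne_empty.mp ⟨u, huf⟩) ((Finset.disjoint_self_iff_empty _).mp this)
  rw [show mCount E (t+1) = S.card from rfl, ← h0, h1, h2, h3]
  rw [Finset.sum_congr rfl h4]
  rfl
end B4
open Classical
section B5
variable {γ : Type*} [DecidableEq γ]

lemma mPolyC_vertex_rec {k : ℕ} (hk : 1 ≤ k) {V : Finset γ} {E : Finset (Finset γ)}
    (u : γ) (hu : u ∈ V) (hE : ∀ h ∈ E, h ⊆ V ∧ h.card = k) (z : ℂ) :
    mPolyC V.card k E z
      = z * mPolyC (V.erase u).card k (E.filter (fun e => u ∉ e)) z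
        - ∑ f ∈ E.filter (fun e => u ∈ e),
            mPolyC ((V \ f).card) k (E.filter (fun h => Disjoint h f)) z := by
  classical
  set n := V.card with hn
  have hn1 : 1 ≤ n := Finset.card_pos.mpr ⟨u, hu⟩
  have hVu : (V.erase u).card = n - 1 := Finset.card_erase_of_mem hu
  -- first term
  have h₀ : z * mPolyC (V.erase u).card k (E.filter (fun e => u ∉ e)) z
      = z ^ n + ∑ t ∈ Finset.range E.card,
          (-1 : ℂ) ^ (t + 1) * (mCount (E.filter (fun e => u ∉ e)) (t + 1) : ℂ)
            * z ^ (n - (t + 1) * k) := by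
    rw [mPolyC_eq_sum_range z (Finset.card_filter_le E _), Finset.mul_sum]
    rw [Finset.sum_range_succ']
    rw [add_comm]
    congr 1
    · rw [mCount_zero]
      simp only [pow_zero, Nat.cast_one, mul_one, one_mul, Nat.zero_mul, Nat.sub_zero]
      rw [← pow_succ']
      congr 1
      omega
    · apply Finset.sum_congr rfl
      intro t ht
      by_cases hc : mCount (E.filter (fun e => u ∉ e)) (t + 1) = 0
      · rw [hc]; simp
      · have hb : (t + 1) * k ≤ (V.erase u).card := by
          apply mCount_bound (V := V.erase u) _ hc
          intro h hh
          rw [Finset.mem_filter] at hh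
          exact ⟨Finset.subset_erase.mpr ⟨(hE h hh.1).1, hh.2⟩, (hE h hh.1).2⟩
        rw [hVu] at hb
        rw [hVu]
        have : z * z ^ (n - 1 - (t + 1) * k) = z ^ (n - (t + 1) * k) := by
          rw [← pow_succ']
          congr 1
          omega
        rw [← this]
        ring
  -- edge terms
  have h₁ : ∀ f ∈ E.filter (fun e => u ∈ e),
      mPolyC ((V \ f).card) k (E.filter (fun h => Disjoint h f)) z
        = ∑ t ∈ Finset.range E.card,
            (-1 : ℂ) ^ t * (mCount (E.filter (fun h => Disjoint h f)) t : ℂ)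
              * z ^ (n - (t + 1) * k) := by
    intro f hf
    rw [Finset.mem_filter] at hf
    obtain ⟨hfE, huf⟩ := hf
    have hfV : f ⊆ V := (hE f hfE).1
    have hfk : f.card = k := (hE f hfE).2
    have hkn : k ≤ n := hfk ▸ Finset.card_le_card hfV
    have hVf : (V \ f).card = n - k := by rw [Finset.card_sdiff_of_subset hfV, hfk]
    have hEc1 : 1 ≤ E.card := Finset.card_pos.mpr ⟨f, hfE⟩
    have hsub : E.filter (fun h => Disjoint h f) ⊆ E.erase f := by
      intro h hh
      rw [Finset.mem_filter] at hh
      rw [Finset.mem_erase]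
      refine ⟨?_, hh.1⟩
      rintro rfl
      exact absurd ((Finset.disjoint_self_iff_empty _).mp hh.2) (Finset.nonempty_iff_ne_empty.mp ⟨u, huf⟩)
    have hcardle : (E.filter (fun h => Disjoint h f)).card ≤ E.card - 1 := by
      calc _ ≤ (E.erase f).card := Finset.card_le_card hsub
        _ = E.card - 1 := Finset.card_erase_of_mem hfE
    rw [mPolyC_eq_sum_range z hcardle, Nat.sub_add_cancel hEc1]
    apply Finset.sum_congr rfl
    intro t ht
    by_cases hc : mCount (E.filter (fun h => Disjoint h f)) t = 0
    · rw [hc]; simp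
    · have hb : t * k ≤ (V \ f).card := by
        apply mCount_bound (V := V \ f) _ hc
        intro h hh
        rw [Finset.mem_filter] at hh
        refine ⟨?_, (hE h hh.1).2⟩
        intro x hx
        rw [Finset.mem_sdiff]
        exact ⟨(hE h hh.1).1 hx, fun hxf => Finset.disjoint_left.mp hh.2 hx hxf⟩
      rw [hVf] at hb ⊢
      congr 2
      rw [add_mul]
      omega
  -- main computation
  have hmain0 : mPolyC V.card k E z
      = (∑ t ∈ Finset.range E.card,
          (-1 : ℂ) ^ (t + 1) * (mCount E (t + 1) : ℂ) * z ^ (n - (t + 1) * k))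
        + (-1 : ℂ) ^ 0 * (mCount E 0 : ℂ) * z ^ (n - 0 * k) := by
    unfold mPolyC
    rw [← hn]
    exact Finset.sum_range_succ' _ _
  rw [hmain0]
  have hF0 : (-1 : ℂ) ^ 0 * (mCount E 0 : ℂ) * z ^ (n - 0 * k) = z ^ n := by
    rw [mCount_zero]; simp
  rw [hF0]
  have hFt : ∀ t, (-1 : ℂ) ^ (t + 1) * (mCount E (t + 1) : ℂ) * z ^ (n - (t + 1) * k)
      = (-1 : ℂ) ^ (t + 1) * (mCount (E.filter (fun e => u ∉ e)) (t + 1) : ℂ)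
          * z ^ (n - (t + 1) * k)
        - ∑ f ∈ E.filter (fun e => u ∈ e),
            (-1 : ℂ) ^ t * (mCount (E.filter (fun h => Disjoint h f)) t : ℂ)
              * z ^ (n - (t + 1) * k) := by
    intro t
    rw [mCount_vertex_rec E u t]
    push_cast
    rw [sub_eq_add_neg, mul_add, add_mul, ← Finset.sum_neg_distrib,
      Finset.mul_sum, Finset.sum_mul]
    congr 1
    apply Finset.sum_congr rfl
    intro f hf
    rw [pow_succ]
    ring
  rw [Finset.sum_congr rfl (fun t _ => hFt t)]
  rw [Finset.sum_sub_distrib]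
  rw [h₀, Finset.sum_congr rfl h₁, Finset.sum_comm]
  ring
end B5
open Classical
section C1
variable {α : Type*} [DecidableEq α]

inductive RT (k : ℕ) (u : α) : Finset α → Finset (Finset α) → Prop
  | base : RT k u {u} ∅
  | attach {V : Finset α} {E : Finset (Finset α)} (e : Finset α) :
      RT k u V E → e.card = k → (e ∩ V).card = 1 → RT k u (V ∪ e) (insert e E)

lemma RT.mem_root {k : ℕ} {u : α} {V : Finset α} {E : Finset (Finset α)}
    (h : RT k u V E) : u ∈ V := by
  induction h with
  | base => simp
  | attach e h hk hc ih => exact Finset.mem_union_left _ ih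

lemma RT.edges {k : ℕ} {u : α} {V : Finset α} {E : Finset (Finset α)}
    (h : RT k u V E) : ∀ f ∈ E, f ⊆ V ∧ f.card = k ∧ f.Nonempty := by
  induction h with
  | base => simp
  | @attach V1 E1 e h hk hc ih =>
    intro f hf
    rw [Finset.mem_insert] at hf
    rcases hf with rfl | hf
    · refine ⟨Finset.subset_union_right, hk, ?_⟩
      have h2 : (f ∩ V1).Nonempty := Finset.card_pos.mp (hc ▸ Nat.one_pos)
      exact ⟨h2.choose, (Finset.mem_inter.mp h2.choose_spec).1⟩
    · exact ⟨(ih f hf).1.trans Finset.subset_union_left, (ih f hf).2⟩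

lemma RT.eq_of_empty {k : ℕ} {u : α} {V : Finset α} {E : Finset (Finset α)}
    (h : RT k u V E) (hE : E = ∅) : V = {u} := by
  cases h with
  | base => rfl
  | attach e h hk hc => exact absurd hE (Finset.insert_ne_empty _ _)

lemma RT.graft {k : ℕ} {w : α} {V' : Finset α} {E' : Finset (Finset α)}
    (h' : RT k w V' E') {u : α} {V₀ : Finset α} {E₀ : Finset (Finset α)}
    (h₀ : RT k u V₀ E₀) (hw : w ∈ V₀) :
    V₀ ∩ V' ⊆ {w} → RT k u (V₀ ∪ V') (E₀ ∪ E') := by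
  induction h' with
  | base =>
    intro _
    rw [Finset.union_eq_left.mpr (Finset.singleton_subset_iff.mpr hw), Finset.union_empty]
    exact h₀
  | @attach V₁ E₁ e h hk hc ih =>
    intro hsub
    have hsub1 : V₀ ∩ V₁ ⊆ {w} :=
      (Finset.inter_subset_inter (le_refl V₀) Finset.subset_union_left).trans hsub
    have ih' := ih hsub1
    obtain ⟨x, hx⟩ := Finset.card_eq_one.mp hc
    have key : e ∩ (V₀ ∪ V₁) = {x} := by
      rw [Finset.inter_union_distrib_left, hx]
      have hsub2 : e ∩ V₀ ⊆ {x} := by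
        intro y hy
        rw [Finset.mem_inter] at hy
        have hyw : y = w := by
          have : y ∈ V₀ ∩ (V₁ ∪ e) := Finset.mem_inter.mpr
            ⟨hy.2, Finset.mem_union_right _ hy.1⟩
          simpa using hsub this
        have hwx : w = x := by
          have : w ∈ e ∩ V₁ := Finset.mem_inter.mpr ⟨hyw ▸ hy.1, h.mem_root⟩
          rw [hx] at this; simpa using this
        rw [hyw, hwx]; simp
      rw [Finset.union_eq_right.mpr hsub2]
    have := RT.attach e ih' hk (by rw [key]; simp)
    rwa [Finset.union_assoc, ← Finset.union_insert] at this

lemma IsHypertree.rt {k : ℕ} {V : Finset α} {E : Finset (Finset α)}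
    (h : IsHypertree k V E) : ∀ u ∈ V, RT k u V E := by
  induction h with
  | single v =>
    intro u hu
    rw [Finset.mem_singleton] at hu
    subst hu
    exact RT.base
  | @attach V E e h hk hc ih =>
    intro u hu
    rw [Finset.mem_union] at hu
    by_cases huV : u ∈ V
    · exact RT.attach e (ih u huV) hk hc
    · have hue : u ∈ e := by tauto
      obtain ⟨w, hw⟩ := Finset.card_eq_one.mp hc
      have hwV : w ∈ V := by
        have : w ∈ e ∩ V := hw ▸ Finset.mem_singleton_self w
        exact (Finset.mem_inter.mp this).2
      have h1 : RT k u ({u} ∪ e) (insert e ∅) := by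
        apply RT.attach e RT.base hk
        have : e ∩ {u} = {u} := by
          apply Finset.Subset.antisymm Finset.inter_subset_right
          rw [Finset.singleton_subset_iff, Finset.mem_inter]
          exact ⟨hue, Finset.mem_singleton_self u⟩
        rw [this]; simp
      have hwe : w ∈ e := by
        have : w ∈ e ∩ V := hw ▸ Finset.mem_singleton_self w
        exact (Finset.mem_inter.mp this).1
      have h2 := (ih w hwV).graft h1 (Finset.mem_union_right _ hwe)
      have h3 : ({u} ∪ e) ∩ V ⊆ {w} := by
        intro y hy
        rw [Finset.mem_inter, Finset.mem_union, Finset.mem_singleton] at hy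
        rcases hy.1 with rfl | hye
        · exact absurd hy.2 huV
        · have : y ∈ e ∩ V := Finset.mem_inter.mpr ⟨hye, hy.2⟩
          rw [hw] at this; exact this
      have h4 := h2 h3
      have hV : ({u} ∪ e) ∪ V = V ∪ e := by
        have : u ∈ e := hue
        ext y
        simp only [Finset.mem_union, Finset.mem_singleton]
        constructor
        · rintro ((rfl | hy) | hy) <;> tauto
        · rintro (hy | hy) <;> tauto
      have hE : insert e ∅ ∪ E = insert e E := by
        ext f; simp [or_comm]
      rwa [hV, hE] at h4

end C1
open Classical
section C2
variable {α : Type*} [DecidableEq α]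

lemma RT.branch {k : ℕ} {u : α} {V : Finset α} {E : Finset (Finset α)}
    (h : RT k u V E) {g : Finset α} (hug : u ∈ g) :
    g ∈ E →
    ∃ (W : α → Finset α) (F : α → Finset (Finset α)) (V₂ : Finset α)
      (E₂ : Finset (Finset α)),
      RT k u V₂ E₂
      ∧ (∀ v ∈ g.erase u, RT k v (W v) (F v))
      ∧ (∀ v ∈ g.erase u, W v ∩ g = {v})
      ∧ V₂ ∩ g = {u}
      ∧ (∀ v ∈ g.erase u, Disjoint (W v) V₂)
      ∧ (∀ v ∈ g.erase u, ∀ v' ∈ g.erase u, v ≠ v' → Disjoint (W v) (W v'))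
      ∧ V = V₂ ∪ (g.erase u).biUnion W
      ∧ E = insert g (E₂ ∪ (g.erase u).biUnion F)
      ∧ g ∉ E₂ ∪ (g.erase u).biUnion F := by
  induction h with
  | base => intro hg; exact absurd hg (Finset.notMem_empty g)
  | @attach V1 E1 e h hk hc ih =>
    intro hg
    by_cases heE : e ∈ E1
    · have hE : insert e E1 = E1 := Finset.insert_eq_self.mpr heE
      have hV : V1 ∪ e = V1 := Finset.union_eq_left.mpr (h.edges e heE).1
      rw [hE] at hg
      rw [hV, hE]
      exact ih hg
    · obtain ⟨x, hx⟩ := Finset.card_eq_one.mp hc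
      have hxe : x ∈ e := by
        have : x ∈ e ∩ V1 := hx ▸ Finset.mem_singleton_self x
        exact (Finset.mem_inter.mp this).1
      have hxV1 : x ∈ V1 := by
        have : x ∈ e ∩ V1 := hx ▸ Finset.mem_singleton_self x
        exact (Finset.mem_inter.mp this).2
      have hinter : ∀ S : Finset α, S ⊆ V1 → x ∈ S → e ∩ S = {x} := by
        intro S hS hxS
        apply Finset.Subset.antisymm
        · intro y hy
          rw [Finset.mem_inter] at hy
          have : y ∈ e ∩ V1 := Finset.mem_inter.mpr ⟨hy.1, hS hy.2⟩
          rwa [hx] at this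
        · rw [Finset.singleton_subset_iff, Finset.mem_inter]
          exact ⟨hxe, hxS⟩
      have heV1x : ∀ y, y ∈ e → y ∈ V1 → y = x := by
        intro y hy1 hy2
        have : y ∈ e ∩ V1 := Finset.mem_inter.mpr ⟨hy1, hy2⟩
        rw [hx] at this; simpa using this
      by_cases hge : g = e
      · subst hge
        have hux : u = x := heV1x u hug h.mem_root
        refine ⟨fun v => {v}, fun _ => ∅, V1, E1, h, ?_, ?_, ?_, ?_, ?_, ?_, ?_, ?_⟩
        · intro v hv; exact RT.base
        · intro v hv
          exact Finset.singleton_inter_of_mem (Finset.mem_of_mem_erase hv)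
        · rw [Finset.inter_comm, hx, hux]
        · intro v hv
          rw [Finset.mem_erase] at hv
          rw [Finset.disjoint_singleton_left]
          intro hvV1
          exact hv.1 (hux ▸ heV1x v hv.2 hvV1)
        · intro v hv v' hv' hvv'
          rw [Finset.disjoint_singleton_left, Finset.mem_singleton]
          exact hvv'
        · ext y
          simp only [Finset.mem_union, Finset.mem_biUnion, Finset.mem_erase,
            Finset.mem_singleton]
          constructor
          · rintro (hy | hy)
            · exact Or.inl hy
            · by_cases hyu : y = u
              · subst hyu; exact Or.inl h.mem_root
              · exact Or.inr ⟨y, ⟨hyu, hy⟩, rfl⟩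
          · rintro (hy | ⟨v, ⟨hvu, hvg⟩, rfl⟩)
            · exact Or.inl hy
            · exact Or.inr hvg
        · congr 1
          ext f
          simp only [Finset.mem_union, Finset.mem_biUnion, Finset.notMem_empty,
            and_false, exists_false, or_false]
        · intro hmem
          rw [Finset.mem_union] at hmem
          rcases hmem with hmem | hmem
          · exact heE hmem
          · rw [Finset.mem_biUnion] at hmem
            obtain ⟨v, -, hv⟩ := hmem
            exact absurd hv (Finset.notMem_empty _)
      · have hgE1 : g ∈ E1 := by
          rcases Finset.mem_insert.mp hg with h' | h'
          · exact absurd h' hge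
          · exact h'
        obtain ⟨W, F, V₂, E₂, h2rt, hWrt, hWg, hV2g, hWV2, hWW, hVeq, hEeq, hgnot⟩ :=
          ih hgE1
        have hgV1 : g ⊆ V1 := (h.edges g hgE1).1
        have huV2 : u ∈ V₂ := h2rt.mem_root
        have hV2V1 : V₂ ⊆ V1 := hVeq ▸ Finset.subset_union_left
        have hWV1 : ∀ v ∈ g.erase u, W v ⊆ V1 := by
          intro v hv y hy
          rw [hVeq, Finset.mem_union, Finset.mem_biUnion]
          exact Or.inr ⟨v, hv, hy⟩
        by_cases hxV2 : x ∈ V₂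
        · -- attach e to the residual tree
          have hiV2 : e ∩ V₂ = {x} := hinter V₂ hV2V1 hxV2
          refine ⟨W, F, V₂ ∪ e, insert e E₂,
            RT.attach e h2rt hk (by rw [hiV2]; simp), hWrt, hWg, ?_, ?_, hWW, ?_, ?_, ?_⟩
          · rw [Finset.union_inter_distrib_right, hV2g]
            have hsub : e ∩ g ⊆ {u} := by
              intro y hy
              rw [Finset.mem_inter] at hy
              have hyx : y = x := heV1x y hy.1 (hgV1 hy.2)
              subst hyx
              have : y ∈ V₂ ∩ g := Finset.mem_inter.mpr ⟨hxV2, hy.2⟩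
              rw [hV2g] at this; exact this
            rw [Finset.union_eq_left.mpr hsub]
          · intro v hv
            rw [Finset.disjoint_union_right]
            refine ⟨hWV2 v hv, ?_⟩
            rw [Finset.disjoint_right]
            intro y hye hyW
            have hyx : y = x := heV1x y hye (hWV1 v hv hyW)
            subst hyx
            exact Finset.disjoint_left.mp (hWV2 v hv) hyW hxV2
          · rw [hVeq, Finset.union_right_comm]
          · rw [hEeq]
            ext f
            simp only [Finset.mem_insert, Finset.mem_union]
            tauto
          · intro hmem
            rw [Finset.mem_union, Finset.mem_insert] at hmem
            rcases hmem with (hmem | hmem) | hmem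
            · exact hge hmem
            · exact hgnot (Finset.mem_union_left _ hmem)
            · exact hgnot (Finset.mem_union_right _ hmem)
        · -- attach e to a branch
          have hxB : x ∈ (g.erase u).biUnion W := by
            have : x ∈ V₂ ∪ (g.erase u).biUnion W := hVeq ▸ hxV1
            rw [Finset.mem_union] at this
            tauto
          rw [Finset.mem_biUnion] at hxB
          obtain ⟨v₀, hv₀, hxW⟩ := hxB
          have hiW : e ∩ W v₀ = {x} := hinter (W v₀) (hWV1 v₀ hv₀) hxW
          have hdje : ∀ v ∈ g.erase u, v ≠ v₀ → Disjoint e (W v) := by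
            intro v hv hvne
            rw [Finset.disjoint_left]
            intro y hye hyW
            have hyx : y = x := heV1x y hye (hWV1 v hv hyW)
            subst hyx
            exact Finset.disjoint_left.mp (hWW v₀ hv₀ v hv (fun hh => hvne hh.symm)) hxW hyW
          have hdjV2 : Disjoint e V₂ := by
            rw [Finset.disjoint_left]
            intro y hye hyV2
            have hyx : y = x := heV1x y hye (hV2V1 hyV2)
            subst hyx
            exact hxV2 hyV2
          refine ⟨Function.update W v₀ (W v₀ ∪ e), Function.update F v₀ (insert e (F v₀)),
            V₂, E₂, h2rt, ?_, ?_, hV2g, ?_, ?_, ?_, ?_, ?_⟩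
          · intro v hv
            by_cases hvv : v = v₀
            · subst hvv
              simp only [Function.update_self]
              exact RT.attach e (hWrt v hv) hk (by rw [hiW]; simp)
            · simp only [Function.update_of_ne hvv]
              exact hWrt v hv
          · intro v hv
            by_cases hvv : v = v₀
            · subst hvv
              rw [Function.update_self, Finset.union_inter_distrib_right, hWg v hv]
              have hsub : e ∩ g ⊆ {v} := by
                intro y hy
                rw [Finset.mem_inter] at hy
                have hyx : y = x := heV1x y hy.1 (hgV1 hy.2)
                subst hyx
                have : y ∈ W v ∩ g := Finset.mem_inter.mpr ⟨hxW, hy.2⟩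
                rw [hWg v hv] at this; exact this
              rw [Finset.union_eq_left.mpr hsub]
            · rw [Function.update_of_ne hvv]
              exact hWg v hv
          · intro v hv
            by_cases hvv : v = v₀
            · subst hvv
              rw [Function.update_self, Finset.disjoint_union_left]
              exact ⟨hWV2 v hv, hdjV2⟩
            · rw [Function.update_of_ne hvv]
              exact hWV2 v hv
          · intro v hv v' hv' hvv'
            by_cases h1 : v = v₀ <;> by_cases h2 : v' = v₀
            · exact absurd (h1.trans h2.symm) hvv'
            · subst h1
              rw [Function.update_self, Function.update_of_ne h2,
                Finset.disjoint_union_left]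
              exact ⟨hWW v hv v' hv' hvv', hdje v' hv' h2⟩
            · subst h2
              rw [Function.update_self, Function.update_of_ne h1,
                Finset.disjoint_union_right]
              exact ⟨hWW v hv v' hv' hvv', (hdje v hv h1).symm⟩
            · rw [Function.update_of_ne h1, Function.update_of_ne h2]
              exact hWW v hv v' hv' hvv'
          · -- vertex set
            have hbU : (g.erase u).biUnion (Function.update W v₀ (W v₀ ∪ e))
                = (g.erase u).biUnion W ∪ e := by
              ext y
              simp only [Finset.mem_biUnion, Finset.mem_union]
              constructor
              · rintro ⟨v, hv, hy⟩
                by_cases hvv : v = v₀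
                · subst hvv
                  rw [Function.update_self, Finset.mem_union] at hy
                  rcases hy with hy | hy
                  · exact Or.inl ⟨v, hv, hy⟩
                  · exact Or.inr hy
                · rw [Function.update_of_ne hvv] at hy
                  exact Or.inl ⟨v, hv, hy⟩
              · rintro (⟨v, hv, hy⟩ | hy)
                · by_cases hvv : v = v₀
                  · subst hvv
                    exact ⟨v, hv, by rw [Function.update_self]; exact
                      Finset.mem_union_left _ hy⟩
                  · exact ⟨v, hv, by rw [Function.update_of_ne hvv]; exact hy⟩
                · exact ⟨v₀, hv₀, by rw [Function.update_self]; exact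
                    Finset.mem_union_right _ hy⟩
            rw [hbU, hVeq, Finset.union_assoc]
          · -- edge set
            have hbF : (g.erase u).biUnion (Function.update F v₀ (insert e (F v₀)))
                = insert e ((g.erase u).biUnion F) := by
              ext f
              simp only [Finset.mem_biUnion, Finset.mem_insert]
              constructor
              · rintro ⟨v, hv, hy⟩
                by_cases hvv : v = v₀
                · subst hvv
                  rw [Function.update_self, Finset.mem_insert] at hy
                  rcases hy with hy | hy
                  · exact Or.inl hy
                  · exact Or.inr ⟨v, hv, hy⟩
                · rw [Function.update_of_ne hvv] at hy
                  exact Or.inr ⟨v, hv, hy⟩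
              · rintro (rfl | ⟨v, hv, hy⟩)
                · exact ⟨v₀, hv₀, by rw [Function.update_self]; exact
                    Finset.mem_insert_self _ _⟩
                · by_cases hvv : v = v₀
                  · subst hvv
                    exact ⟨v, hv, by rw [Function.update_self]; exact
                      Finset.mem_insert_of_mem hy⟩
                  · exact ⟨v, hv, by rw [Function.update_of_ne hvv]; exact hy⟩
            rw [hbF, hEeq]
            ext f
            simp only [Finset.mem_insert, Finset.mem_union]
            tauto
          · intro hmem
            rw [Finset.mem_union, Finset.mem_biUnion] at hmem
            rcases hmem with hmem | ⟨v, hv, hmem⟩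
            · exact hgnot (Finset.mem_union_left _ hmem)
            · by_cases hvv : v = v₀
              · subst hvv
                rw [Function.update_self, Finset.mem_insert] at hmem
                rcases hmem with hmem | hmem
                · exact hge hmem
                · exact hgnot (Finset.mem_union_right _
                    (Finset.mem_biUnion.mpr ⟨v, hv, hmem⟩))
              · rw [Function.update_of_ne hvv] at hmem
                exact hgnot (Finset.mem_union_right _
                  (Finset.mem_biUnion.mpr ⟨v, hv, hmem⟩))
end C2
open Classical
section C3
variable {α : Type*} [DecidableEq α]

lemma mPolyC_pieces {k : ℕ} (hk : 1 ≤ k) (z : ℂ) (s : Finset α)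
    (W : α → Finset α) (F : α → Finset (Finset α)) :
    ∀ (U₀ : Finset α) (E₀ : Finset (Finset α)),
    (∀ h ∈ E₀, h ⊆ U₀ ∧ h.card = k) →
    (∀ v ∈ s, ∀ h ∈ F v, h ⊆ W v ∧ h.card = k) →
    (∀ v ∈ s, Disjoint U₀ (W v)) →
    (∀ v ∈ s, ∀ v' ∈ s, v ≠ v' → Disjoint (W v) (W v')) →
    mPolyC (U₀.card + ∑ v ∈ s, (W v).card) k (E₀ ∪ s.biUnion F) z
      = mPolyC U₀.card k E₀ z * ∏ v ∈ s, mPolyC (W v).card k (F v) z := by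
  induction s using Finset.induction_on with
  | empty => intro U₀ E₀ _ _ _ _; simp
  | @insert a s ha ih =>
    intro U₀ E₀ hE₀ hF hdW hWW
    have hWa := hF a (Finset.mem_insert_self a s)
    have hdWa := hdW a (Finset.mem_insert_self a s)
    have hcard : (U₀ ∪ W a).card = U₀.card + (W a).card :=
      Finset.card_union_of_disjoint hdWa
    have hihyp1 : ∀ h ∈ E₀ ∪ F a, h ⊆ U₀ ∪ W a ∧ h.card = k := by
      intro f hf
      rw [Finset.mem_union] at hf
      rcases hf with hf | hf
      · exact ⟨(hE₀ f hf).1.trans Finset.subset_union_left, (hE₀ f hf).2⟩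
      · exact ⟨(hWa f hf).1.trans Finset.subset_union_right, (hWa f hf).2⟩
    have hihyp2 : ∀ v ∈ s, ∀ h ∈ F v, h ⊆ W v ∧ h.card = k :=
      fun v hv => hF v (Finset.mem_insert_of_mem hv)
    have hihyp3 : ∀ v ∈ s, Disjoint (U₀ ∪ W a) (W v) := by
      intro v hv
      rw [Finset.disjoint_union_left]
      exact ⟨hdW v (Finset.mem_insert_of_mem hv),
        hWW a (Finset.mem_insert_self a s) v (Finset.mem_insert_of_mem hv)
          (fun hh => ha (hh ▸ hv))⟩
    have hihyp4 : ∀ v ∈ s, ∀ v' ∈ s, v ≠ v' → Disjoint (W v) (W v') :=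
      fun v hv v' hv' => hWW v (Finset.mem_insert_of_mem hv) v'
        (Finset.mem_insert_of_mem hv')
    have hih := ih (U₀ ∪ W a) (E₀ ∪ F a) hihyp1 hihyp2 hihyp3 hihyp4
    have hsplit : mPolyC (U₀.card + (W a).card) k (E₀ ∪ F a) z
        = mPolyC U₀.card k E₀ z * mPolyC (W a).card k (F a) z := by
      refine mPolyC_union (k := k) (n₁ := U₀.card) (n₂ := (W a).card) (E₁ := E₀) (E₂ := F a) z ?_ ?_ ?_ ?_
      · intro e₁ he₁ e₂ he₂
        exact hdWa.mono (hE₀ e₁ he₁).1 (hWa e₂ he₂).1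
      · rw [Finset.disjoint_left]
        intro f hf1 hf2
        have hne : f.Nonempty := Finset.card_pos.mp (by rw [(hE₀ f hf1).2]; omega)
        obtain ⟨y, hy⟩ := hne
        exact Finset.disjoint_left.mp hdWa ((hE₀ f hf1).1 hy) ((hWa f hf2).1 hy)
      · intro t ht; exact mCount_bound hE₀ ht
      · intro t ht; exact mCount_bound hWa ht
    rw [Finset.sum_insert ha, Finset.prod_insert ha, Finset.biUnion_insert]
    rw [show E₀ ∪ (F a ∪ s.biUnion F) = (E₀ ∪ F a) ∪ s.biUnion F from
      (Finset.union_assoc _ _ _).symm]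
    rw [show U₀.card + ((W a).card + ∑ v ∈ s, (W v).card)
      = (U₀ ∪ W a).card + ∑ v ∈ s, (W v).card by rw [hcard]; ring]
    rw [hih, hcard, hsplit]
    ring
end C3
open Classical
section D1
variable {α : Type*} [DecidableEq α]

lemma mainstar (k : ℕ) (n : ℕ) :
    ∀ (V : Finset α) (E : Finset (Finset α)), E.card = n → ∀ (u : α), RT k u V E →
    ∀ (lam : ℂ) (p : α → ℂ), (∀ v ∈ V, p v ≠ 0) →
    (∀ v ∈ V.erase u,
      lam * (p v) ^ (k - 1)
        = ∑ e ∈ E.filter (fun e => v ∈ e), ∏ w ∈ e.erase v, p w) →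
    (p u) ^ (k - 1) * mPolyC V.card k E lam
      = (lam * (p u) ^ (k - 1)
          - ∑ f ∈ E.filter (fun e => u ∈ e), ∏ w ∈ f.erase u, p w)
        * mPolyC (V.erase u).card k (E.filter (fun e => u ∉ e)) lam := by
  induction n using Nat.strong_induction_on with
  | _ n ih =>
    intro V E hn u hrt lam p hp0 heig
    by_cases hE : E = ∅
    · subst hE
      have hV : V = {u} := hrt.eq_of_empty rfl
      subst hV
      rw [Finset.filter_empty, Finset.filter_empty, Finset.sum_empty,
        mPolyC_empty, mPolyC_empty]
      simp only [Finset.card_singleton, Finset.erase_singleton, Finset.card_empty,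
        sub_zero, pow_zero, pow_one, mul_one]
      ring
    · -- invariants
      have hedges := hrt.edges
      have hk1 : 1 ≤ k := by
        obtain ⟨f, hf⟩ := Finset.nonempty_iff_ne_empty.mpr hE
        have := (hedges f hf).2
        rw [← this.1]
        exact Finset.card_pos.mpr this.2
      have hID := mPolyC_vertex_rec (k := k) hk1 u hrt.mem_root
        (fun h hh => ⟨(hedges h hh).1, (hedges h hh).2.1⟩) lam
      have coreb : ∀ g ∈ E.filter (fun e => u ∈ e),
          (p u) ^ (k - 1) * mPolyC ((V \ g).card) k (E.filter (fun h => Disjoint h g)) lam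
            = (∏ w ∈ g.erase u, p w)
              * mPolyC (V.erase u).card k (E.filter (fun e => u ∉ e)) lam := by
        intro g hgf
        rw [Finset.mem_filter] at hgf
        obtain ⟨hgE, hug⟩ := hgf
        obtain ⟨W, F, V₂, E₂, h2rt, hWrt, hWg, hV2g, hWV2, hWW, hVeq, hEeq, hgnot⟩ :=
          hrt.branch hug hgE
        set s := g.erase u with hs
        have hgV : g ⊆ V := (hedges g hgE).1
        have hgk : g.card = k := (hedges g hgE).2.1
        have hscard : s.card = k - 1 := by rw [hs, Finset.card_erase_of_mem hug, hgk]
        have huV2 : u ∈ V₂ := h2rt.mem_root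
        have hvWv : ∀ v ∈ s, v ∈ W v := fun v hv => (hWrt v hv).mem_root
        have huW : ∀ v ∈ s, u ∉ W v := fun v hv h =>
          Finset.disjoint_left.mp (hWV2 v hv) h huV2
        have hWsubV : ∀ v ∈ s, W v ⊆ V := by
          intro v hv y hy
          rw [hVeq, Finset.mem_union]
          exact Or.inr (Finset.mem_biUnion.mpr ⟨v, hv, hy⟩)
        have hV2subV : V₂ ⊆ V := hVeq ▸ Finset.subset_union_left
        have hE2edges : ∀ h ∈ E₂, h ⊆ V₂ ∧ h.card = k :=
          fun h hh => ⟨(h2rt.edges h hh).1, (h2rt.edges h hh).2.1⟩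
        have hFedges : ∀ v ∈ s, ∀ h ∈ F v, h ⊆ W v ∧ h.card = k :=
          fun v hv h hh => ⟨((hWrt v hv).edges h hh).1, ((hWrt v hv).edges h hh).2.1⟩
        have hvne_u : ∀ v ∈ s, v ≠ u := fun v hv => (Finset.mem_erase.mp hv).1
        have hvg : ∀ v ∈ s, v ∈ g := fun v hv => (Finset.mem_erase.mp hv).2
        have hmemE : ∀ f, f ∈ E ↔ (f = g ∨ f ∈ E₂ ∨ ∃ v ∈ s, f ∈ F v) := by
          intro f
          rw [hEeq]
          simp only [Finset.mem_insert, Finset.mem_union, Finset.mem_biUnion]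
        -- filter for T - u
        have hfilt_u : E.filter (fun e => u ∉ e)
            = E₂.filter (fun e => u ∉ e) ∪ s.biUnion F := by
          ext f
          simp only [Finset.mem_filter, Finset.mem_union, Finset.mem_biUnion, hmemE f]
          constructor
          · rintro ⟨rfl | hf | ⟨v, hv, hf⟩, hu⟩
            · exact absurd hug hu
            · exact Or.inl ⟨hf, hu⟩
            · exact Or.inr ⟨v, hv, hf⟩
          · rintro (⟨hf, hu⟩ | ⟨v, hv, hf⟩)
            · exact ⟨Or.inr (Or.inl hf), hu⟩
            · exact ⟨Or.inr (Or.inr ⟨v, hv, hf⟩),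
                fun hu => huW v hv ((hFedges v hv f hf).1 hu)⟩
        -- vertex set for T - u
        have hVerase : V.erase u = (V₂.erase u) ∪ s.biUnion W := by
          ext y
          simp only [Finset.mem_erase, Finset.mem_union, Finset.mem_biUnion, hVeq]
          constructor
          · rintro ⟨hyu, hy | hy⟩
            · exact Or.inl ⟨hyu, hy⟩
            · exact Or.inr hy
          · rintro (⟨hyu, hy⟩ | ⟨v, hv, hy⟩)
            · exact ⟨hyu, Or.inl hy⟩
            · exact ⟨fun hh => huW v hv (hh ▸ hy),
                Or.inr ⟨v, hv, hy⟩⟩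
        have hdisj2 : ∀ v ∈ s, Disjoint (V₂.erase u) (W v) :=
          fun v hv => ((hWV2 v hv).symm.mono_left (Finset.erase_subset _ _))
        have hcard_u : (V.erase u).card
            = (V₂.erase u).card + ∑ v ∈ s, (W v).card := by
          rw [hVerase, Finset.card_union_of_disjoint, Finset.card_biUnion hWW]
          rw [Finset.disjoint_biUnion_right]
          exact hdisj2
        -- pieces for T - u
        have hTmu : mPolyC (V.erase u).card k (E.filter (fun e => u ∉ e)) lam
            = mPolyC (V₂.erase u).card k (E₂.filter (fun e => u ∉ e)) lam
              * ∏ v ∈ s, mPolyC (W v).card k (F v) lam := by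
          rw [hcard_u, hfilt_u]
          apply mPolyC_pieces hk1 lam s W F (V₂.erase u) (E₂.filter (fun e => u ∉ e))
          · intro h hh
            rw [Finset.mem_filter] at hh
            exact ⟨Finset.subset_erase.mpr ⟨(hE2edges h hh.1).1, hh.2⟩,
              (hE2edges h hh.1).2⟩
          · exact hFedges
          · exact hdisj2
          · exact hWW
        -- vertex set for T - g
        have hVg : V \ g = (V₂.erase u) ∪ s.biUnion (fun v => (W v).erase v) := by
          ext y
          simp only [Finset.mem_sdiff, Finset.mem_union, Finset.mem_biUnion,
            Finset.mem_erase, hVeq]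
          constructor
          · rintro ⟨hy | hy, hyg⟩
            · exact Or.inl ⟨fun hh => hyg (hh ▸ hug), hy⟩
            · obtain ⟨v, hv, hyW⟩ := hy
              exact Or.inr ⟨v, hv, ⟨fun hh => hyg (hh ▸ hvg v hv), hyW⟩⟩
          · rintro (⟨hyu, hy⟩ | ⟨v, hv, hyv, hyW⟩)
            · refine ⟨Or.inl hy, fun hyg => hyu ?_⟩
              have : y ∈ V₂ ∩ g := Finset.mem_inter.mpr ⟨hy, hyg⟩
              rw [hV2g] at this; simpa using this
            · refine ⟨Or.inr ⟨v, hv, hyW⟩, fun hyg => hyv ?_⟩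
              have : y ∈ W v ∩ g := Finset.mem_inter.mpr ⟨hyW, hyg⟩
              rw [hWg v hv] at this; simpa using this
        -- edges for T - g
        have hEg : E.filter (fun h => Disjoint h g)
            = E₂.filter (fun e => u ∉ e)
              ∪ s.biUnion (fun v => (F v).filter (fun h => v ∉ h)) := by
          ext f
          simp only [Finset.mem_filter, Finset.mem_union, Finset.mem_biUnion, hmemE f,
            Finset.mem_filter]
          constructor
          · rintro ⟨rfl | hf | ⟨v, hv, hf⟩, hdis⟩
            · exact absurd (Finset.disjoint_left.mp hdis hug) (fun hh => hh hug)
            · exact Or.inl ⟨hf, fun hu => Finset.disjoint_left.mp hdis hu hug⟩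
            · exact Or.inr ⟨v, hv, hf, fun hvf =>
                Finset.disjoint_left.mp hdis hvf (hvg v hv)⟩
          · rintro (⟨hf, hu⟩ | ⟨v, hv, hf, hvf⟩)
            · refine ⟨Or.inr (Or.inl hf), Finset.disjoint_left.mpr ?_⟩
              intro y hyf hyg
              have : y ∈ V₂ ∩ g := Finset.mem_inter.mpr ⟨(hE2edges f hf).1 hyf, hyg⟩
              rw [hV2g] at this
              exact hu ((Finset.mem_singleton.mp this) ▸ hyf)
            · refine ⟨Or.inr (Or.inr ⟨v, hv, hf⟩), Finset.disjoint_left.mpr ?_⟩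
              intro y hyf hyg
              have : y ∈ W v ∩ g := Finset.mem_inter.mpr ⟨(hFedges v hv f hf).1 hyf, hyg⟩
              rw [hWg v hv] at this
              exact hvf ((Finset.mem_singleton.mp this) ▸ hyf)
        have hcard_g : (V \ g).card
            = (V₂.erase u).card + ∑ v ∈ s, ((W v).erase v).card := by
          rw [hVg, Finset.card_union_of_disjoint, Finset.card_biUnion]
          · intro v hv v' hv' hne
            exact (hWW v hv v' hv' hne).mono (Finset.erase_subset _ _)
              (Finset.erase_subset _ _)
          · rw [Finset.disjoint_biUnion_right]
            exact fun v hv => (hdisj2 v hv).mono_right (Finset.erase_subset _ _)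
        have hTmg : mPolyC (V \ g).card k (E.filter (fun h => Disjoint h g)) lam
            = mPolyC (V₂.erase u).card k (E₂.filter (fun e => u ∉ e)) lam
              * ∏ v ∈ s, mPolyC ((W v).erase v).card k
                  ((F v).filter (fun h => v ∉ h)) lam := by
          rw [hcard_g, hEg]
          apply mPolyC_pieces hk1 lam s (fun v => (W v).erase v)
            (fun v => (F v).filter (fun h => v ∉ h)) (V₂.erase u)
            (E₂.filter (fun e => u ∉ e))
          · intro h hh
            rw [Finset.mem_filter] at hh
            exact ⟨Finset.subset_erase.mpr ⟨(hE2edges h hh.1).1, hh.2⟩,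
              (hE2edges h hh.1).2⟩
          · intro v hv h hh
            rw [Finset.mem_filter] at hh
            exact ⟨Finset.subset_erase.mpr ⟨(hFedges v hv h hh.1).1, hh.2⟩,
              (hFedges v hv h hh.1).2⟩
          · exact fun v hv => (hdisj2 v hv).mono_right (Finset.erase_subset _ _)
          · intro v hv v' hv' hne
            exact (hWW v hv v' hv' hne).mono (Finset.erase_subset _ _)
              (Finset.erase_subset _ _)
        -- per-branch identity
        have hEcard : E.card = (E₂ ∪ s.biUnion F).card + 1 := by
          rw [hEeq, Finset.card_insert_of_notMem hgnot]
        have hdag : ∀ v ∈ s, (p v) ^ (k - 1) * mPolyC (W v).card k (F v) lam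
            = (∏ w ∈ g.erase v, p w)
              * mPolyC ((W v).erase v).card k ((F v).filter (fun e => v ∉ e)) lam := by
          intro v hv
          have hFsub : F v ⊆ E₂ ∪ s.biUnion F := by
            intro f hf
            exact Finset.mem_union_right _ (Finset.mem_biUnion.mpr ⟨v, hv, hf⟩)
          have hFcard : (F v).card < n := by
            have := Finset.card_le_card hFsub
            omega
          have hp0' : ∀ x ∈ W v, p x ≠ 0 := fun x hx => hp0 x (hWsubV v hv hx)
          have heig' : ∀ x ∈ (W v).erase v,
              lam * (p x) ^ (k - 1)
                = ∑ e ∈ (F v).filter (fun e => x ∈ e), ∏ w ∈ e.erase x, p w := by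
            intro x hx
            rw [Finset.mem_erase] at hx
            have hxV : x ∈ V.erase u := Finset.mem_erase.mpr
              ⟨fun hh => huW v hv (hh ▸ hx.2), hWsubV v hv hx.2⟩
            have hfeq : E.filter (fun e => x ∈ e) = (F v).filter (fun e => x ∈ e) := by
              ext f
              simp only [Finset.mem_filter, hmemE f]
              constructor
              · rintro ⟨rfl | hf | ⟨v', hv', hf⟩, hxf⟩
                · exact absurd ((hWg v hv) ▸ Finset.mem_inter.mpr ⟨hx.2, hxf⟩)
                    (by simp [hx.1])
                · exact absurd (Finset.disjoint_left.mp (hWV2 v hv) hx.2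
                    ((hE2edges f hf).1 hxf)) id
                · by_cases hvv' : v' = v
                  · subst hvv'; exact ⟨hf, hxf⟩
                  · exact absurd (Finset.disjoint_left.mp
                      (hWW v hv v' hv' (fun hh => hvv' hh.symm)) hx.2
                      ((hFedges v' hv' f hf).1 hxf)) id
              · rintro ⟨hf, hxf⟩
                exact ⟨Or.inr (Or.inr ⟨v, hv, hf⟩), hxf⟩
            rw [← hfeq]
            exact heig x hxV
          have hih := ih (F v).card hFcard (W v) (F v) rfl v (hWrt v hv) lam p hp0' heig'
          have hvV : v ∈ V.erase u := Finset.mem_erase.mpr ⟨hvne_u v hv, hgV (hvg v hv)⟩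
          have heqv := heig v hvV
          have hEfv : E.filter (fun e => v ∈ e)
              = insert g ((F v).filter (fun e => v ∈ e)) := by
            ext f
            simp only [Finset.mem_filter, Finset.mem_insert, hmemE f]
            constructor
            · rintro ⟨rfl | hf | ⟨v', hv', hf⟩, hvf⟩
              · exact Or.inl rfl
              · exact absurd (Finset.disjoint_left.mp (hWV2 v hv) (hvWv v hv)
                  ((hE2edges f hf).1 hvf)) id
              · by_cases hvv' : v' = v
                · subst hvv'; exact Or.inr ⟨hf, hvf⟩
                · exact absurd (Finset.disjoint_left.mp
                    (hWW v hv v' hv' (fun hh => hvv' hh.symm)) (hvWv v hv)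
                    ((hFedges v' hv' f hf).1 hvf)) id
            · rintro (rfl | ⟨hf, hvf⟩)
              · exact ⟨Or.inl rfl, hvg v hv⟩
              · exact ⟨Or.inr (Or.inr ⟨v, hv, hf⟩), hvf⟩
          have hgnotF : g ∉ (F v).filter (fun e => v ∈ e) := by
            intro hmem
            rw [Finset.mem_filter] at hmem
            exact hgnot (Finset.mem_union_right _
              (Finset.mem_biUnion.mpr ⟨v, hv, hmem.1⟩))
          rw [hEfv, Finset.sum_insert hgnotF] at heqv
          rw [hih]
          have hkey : lam * (p v) ^ (k - 1)
              - ∑ f ∈ (F v).filter (fun e => v ∈ e), ∏ w ∈ f.erase v, p w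
              = ∏ w ∈ g.erase v, p w := by
            rw [heqv]; ring
          rw [hkey]
        -- final algebra
        rw [hTmu, hTmg]
        set q := p u with hq
        set P := ∏ v ∈ s, p v with hP
        set X := ∏ v ∈ s, ∏ w ∈ s.erase v, p w with hX
        set PA := ∏ v ∈ s, mPolyC (W v).card k (F v) lam with hPA
        set PB := ∏ v ∈ s, mPolyC ((W v).erase v).card k
          ((F v).filter (fun h => v ∉ h)) lam with hPB
        have hins : ∀ v ∈ s, g.erase v = insert u (s.erase v) := by
          intro v hv
          have hgins : insert u s = g := Finset.insert_erase hug
          rw [← hgins, Finset.erase_insert_of_ne (fun hh => hvne_u v hv hh.symm)]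
        have hus : u ∉ s := fun hh => (Finset.mem_erase.mp hh).1 rfl
        have h2 : ∀ v ∈ s, (∏ w ∈ g.erase v, p w)
            = q * ∏ w ∈ s.erase v, p w := by
          intro v hv
          rw [hins v hv, Finset.prod_insert (fun hh => hus (Finset.mem_of_mem_erase hh))]
        have hstar : P ^ (k - 1) * PA = q ^ (k - 1) * (X * PB) := by
          have h1 : ∏ v ∈ s, ((p v) ^ (k - 1) * mPolyC (W v).card k (F v) lam)
              = ∏ v ∈ s, ((∏ w ∈ g.erase v, p w)
                * mPolyC ((W v).erase v).card k ((F v).filter (fun h => v ∉ h)) lam) :=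
            Finset.prod_congr rfl (fun v hv => hdag v hv)
          calc P ^ (k - 1) * PA
              = ∏ v ∈ s, ((p v) ^ (k - 1) * mPolyC (W v).card k (F v) lam) := by
                rw [Finset.prod_mul_distrib, Finset.prod_pow]
            _ = ∏ v ∈ s, ((q * ∏ w ∈ s.erase v, p w)
                * mPolyC ((W v).erase v).card k ((F v).filter (fun h => v ∉ h)) lam) := by
                rw [h1]
                exact Finset.prod_congr rfl (fun v hv => by rw [h2 v hv])
            _ = q ^ (k - 1) * (X * PB) := by
                rw [Finset.prod_mul_distrib, Finset.prod_mul_distrib,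
                  Finset.prod_const, hscard]
                ring
        have hXP : X * P = P ^ s.card := by
          rw [hX, hP, ← Finset.prod_mul_distrib]
          calc ∏ v ∈ s, ((∏ w ∈ s.erase v, p w) * p v)
              = ∏ _v ∈ s, ∏ w ∈ s, p w :=
                Finset.prod_congr rfl (fun v hv => Finset.prod_erase_mul s p hv)
            _ = (∏ w ∈ s, p w) ^ s.card := Finset.prod_const _
        have hsubVg : ∀ w ∈ s, w ∈ V := fun w hw => hgV (hvg w hw)
        have hXne : X ≠ 0 := by
          rw [hX]
          apply Finset.prod_ne_zero_iff.mpr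
          intro v hv
          apply Finset.prod_ne_zero_iff.mpr
          intro w hw
          exact hp0 w (hsubVg w (Finset.mem_of_mem_erase hw))
        have hqne : q ≠ 0 := hp0 u (hgV hug)
        have hmain2 : q ^ (k - 1) * PB = P * PA := by
          apply mul_left_cancel₀ (mul_ne_zero hXne (pow_ne_zero (k - 1) hqne))
          calc (X * q ^ (k - 1)) * (q ^ (k - 1) * PB)
              = q ^ (k - 1) * (q ^ (k - 1) * (X * PB)) := by ring
            _ = q ^ (k - 1) * (P ^ (k - 1) * PA) := by rw [← hstar]
            _ = q ^ (k - 1) * ((X * P) * PA) := by rw [hXP, hscard]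
            _ = (X * q ^ (k - 1)) * (P * PA) := by ring
        linear_combination (mPolyC (V₂.erase u).card k
          (E₂.filter (fun e => u ∉ e)) lam) * hmain2
      rw [hID, mul_sub, Finset.mul_sum, Finset.sum_congr rfl coreb, sub_mul,
        Finset.sum_mul]
      ring
end D1
open Classical in
/-- For a `k`-uniform hypertree `T` with vertex `u` and a point `p` of the variety defined
by the eigenvalue equations with `x_u = 1`, all of whose coordinates are nonzero, one has
`λ − ∑_{e ∈ E_u} p_{e∖{u}} = φ_T(λ)/φ_{T−u}(λ)`. -/
theorem stmt9 {α : Type*} [DecidableEq α] (k : ℕ)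
    (V : Finset α) (E : Finset (Finset α)) (hT : IsHypertree k V E)
    (u : α) (hu : u ∈ V) (lam : ℂ) (p : α → ℂ)
    (hpu : p u = 1) (hp0 : ∀ v ∈ V, p v ≠ 0)
    (heig : ∀ v ∈ V.erase u,
      lam * (p v) ^ (k - 1)
        = ∑ e ∈ E.filter (fun e => v ∈ e), ∏ w ∈ e.erase v, p w)
    (hden : mPolyC (V.erase u).card k (E.filter (fun e => u ∉ e)) lam ≠ 0) :
    lam - ∑ e ∈ E.filter (fun e => u ∈ e), ∏ w ∈ e.erase u, p w
      = mPolyC V.card k E lam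
        / mPolyC (V.erase u).card k (E.filter (fun e => u ∉ e)) lam := by
  have hrt := hT.rt u hu
  have hmain := mainstar k E.card V E rfl u hrt lam p hp0 heig
  rw [hpu, one_pow, one_mul, mul_one] at hmain
  rw [eq_div_iff hden]
  exact hmain.symm
end

section
/- Let T be a k-uniform hypertree with k ≥ 3 and at least one edge, and let ρ be the largest real root of its matching polynomial φ_T. Then ρ is a simple root of φ_T, i.e., φ_T(ρ) = 0 and φ_T'(ρ) ≠ 0. -/
/-- The matching polynomial `φ_H = ∑_t (-1)^t m_t(H) X^(n - t k)` as a real polynomial. -/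
noncomputable def mPolynomial {γ : Type*} (n k : ℕ) (E : Finset (Finset γ)) : Polynomial ℝ :=
  ∑ t ∈ Finset.range (E.card + 1),
    Polynomial.C ((-1 : ℝ) ^ t * (mCount E t : ℝ)) * Polynomial.X ^ (n - t * k)

set_option linter.unusedSectionVars false
set_option linter.unusedVariables false
set_option maxHeartbeats 1000000

namespace Stmt13Aux

open Polynomial Finset

variable {γ : Type*} [DecidableEq γ]

open Classical in
noncomputable def matchings (A : Finset (Finset γ)) : Finset (Finset (Finset γ)) :=
  A.powerset.filter (fun M => IsHyperMatching M)

open Classical in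
noncomputable def Z (A : Finset (Finset γ)) : Polynomial ℝ :=
  ∑ M ∈ matchings A, (Polynomial.C ((-1:ℝ) ^ M.card) * Polynomial.X ^ M.card)

lemma mem_matchings {A M : Finset (Finset γ)} :
    M ∈ matchings A ↔ M ⊆ A ∧ IsHyperMatching M := by
  classical
  simp [matchings, Finset.mem_filter, Finset.mem_powerset]

lemma isHyperMatching_subset {M M' : Finset (Finset γ)} (h : IsHyperMatching M)
    (hsub : M' ⊆ M) : IsHyperMatching M' :=
  fun e he f hf hef => h e (hsub he) f (hsub hf) hef


lemma empty_mem_matchings (A : Finset (Finset γ)) : (∅ : Finset (Finset γ)) ∈ matchings A :=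
  mem_matchings.2 ⟨Finset.empty_subset _, fun e he => absurd he (Finset.notMem_empty _)⟩

lemma matchings_empty : matchings (∅ : Finset (Finset γ)) = {∅} := by
  apply Finset.ext
  intro M
  simp only [mem_matchings, Finset.mem_singleton, Finset.subset_empty]
  constructor
  · rintro ⟨h, _⟩; exact h
  · rintro rfl; exact ⟨rfl, fun e he => absurd he (Finset.notMem_empty _)⟩

lemma Z_empty : Z (∅ : Finset (Finset γ)) = 1 := by
  rw [Z, matchings_empty]
  simp

lemma Z_eval (A : Finset (Finset γ)) (x : ℝ) :
    (Z A).eval x = ∑ M ∈ matchings A, (-1:ℝ) ^ M.card * x ^ M.card := by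
  rw [Z, Polynomial.eval_finset_sum]
  simp

lemma Z_eval_zero (A : Finset (Finset γ)) : (Z A).eval 0 = 1 := by
  rw [Z_eval]
  rw [Finset.sum_eq_single (∅ : Finset (Finset γ))]
  · simp
  · intro M hM hMne
    have : M.card ≠ 0 := fun h => hMne (Finset.card_eq_zero.1 h)
    simp [zero_pow this]
  · intro h; exact absurd (empty_mem_matchings A) h

-- the `u ∈ M` part of the matchings, in bijection with matchings of edges disjoint from u
lemma sum_matchings_mem {β : Type*} [AddCommMonoid β] {A : Finset (Finset γ)}
    {u : Finset γ} (hu : u ∈ A) (hune : u.Nonempty) (F : ℕ → β) :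
    ∑ M ∈ (matchings A).filter (fun M => u ∈ M), F M.card
      = ∑ M ∈ matchings (A.filter (fun g => Disjoint g u)), F (M.card + 1) := by
  classical
  have hunotin : ∀ M' ∈ matchings (A.filter (fun g => Disjoint g u)), u ∉ M' := by
    intro M' hM' hmem
    have := (mem_matchings.1 hM').1 hmem
    rw [Finset.mem_filter] at this
    exact hune.ne_empty (by simpa using disjoint_self.1 this.2)
  apply Finset.sum_nbij' (fun M => M.erase u) (fun M' => insert u M')
  · intro M hM
    rw [Finset.mem_filter] at hM
    obtain ⟨hM, huM⟩ := hM
    rw [mem_matchings] at hM ⊢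
    constructor
    · intro f hf
      rw [Finset.mem_erase] at hf
      rw [Finset.mem_filter]
      exact ⟨hM.1 hf.2, hM.2 f hf.2 u huM hf.1⟩
    · exact isHyperMatching_subset hM.2 (Finset.erase_subset _ _)
  · intro M' hM'
    rw [Finset.mem_filter]
    have hM'm := mem_matchings.1 hM'
    refine ⟨mem_matchings.2 ⟨?_, ?_⟩, Finset.mem_insert_self _ _⟩
    · intro f hf
      rcases Finset.mem_insert.1 hf with rfl | hf
      · exact hu
      · exact (Finset.mem_filter.1 (hM'm.1 hf)).1
    · intro e he f hf hef
      rcases Finset.mem_insert.1 he with heu | he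
      · rcases Finset.mem_insert.1 hf with hfu | hf
        · exact absurd (heu.trans hfu.symm) hef
        · rw [heu]; exact ((Finset.mem_filter.1 (hM'm.1 hf)).2).symm
      · rcases Finset.mem_insert.1 hf with hfu | hf
        · rw [hfu]; exact (Finset.mem_filter.1 (hM'm.1 he)).2
        · exact hM'm.2 e he f hf hef
  · intro M hM
    rw [Finset.mem_filter] at hM
    exact Finset.insert_erase hM.2
  · intro M' hM'
    exact Finset.erase_insert (hunotin M' hM')
  · intro M hM
    rw [Finset.mem_filter] at hM
    congr 1
    rw [Finset.card_erase_of_mem hM.2]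
    have : M.card ≠ 0 := fun h => (Finset.card_eq_zero.1 h ▸ hM.2 : u ∈ (∅ : Finset (Finset γ)))
      |> (Finset.notMem_empty u)
    omega

lemma matchings_erase (A : Finset (Finset γ)) (u : Finset γ) :
    matchings (A.erase u) = (matchings A).filter (fun M => u ∉ M) := by
  classical
  apply Finset.ext
  intro M
  simp only [mem_matchings, Finset.mem_filter, Finset.subset_erase]
  tauto

lemma Z_deletion {A : Finset (Finset γ)} {u : Finset γ} (hu : u ∈ A) (hune : u.Nonempty) :
    Z A = Z (A.erase u) - Polynomial.X * Z (A.filter (fun g => Disjoint g u)) := by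
  classical
  rw [Z, ← Finset.sum_filter_add_sum_filter_not (matchings A) (fun M => u ∈ M)]
  rw [sum_matchings_mem hu hune (fun c => (Polynomial.C ((-1:ℝ) ^ c) * Polynomial.X ^ c))]
  have h1 : ∑ M ∈ matchings (A.filter (fun g => Disjoint g u)),
      (Polynomial.C ((-1:ℝ) ^ (M.card + 1)) * Polynomial.X ^ (M.card + 1))
      = - (Polynomial.X * Z (A.filter (fun g => Disjoint g u))) := by
    rw [Z, Finset.mul_sum, ← Finset.sum_neg_distrib]
    apply Finset.sum_congr rfl
    intro M hM
    simp only [pow_succ, map_mul, Polynomial.C_neg, Polynomial.C_1, map_one]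
    ring
  rw [h1]
  have h2 : Z (A.erase u)
      = ∑ M ∈ (matchings A).filter (fun M => ¬ u ∈ M),
          (Polynomial.C ((-1:ℝ) ^ M.card) * Polynomial.X ^ M.card) := by
    rw [Z, matchings_erase]
  rw [h2]
  ring

lemma Z_derivative {A : Finset (Finset γ)} (hne : ∀ f ∈ A, f.Nonempty) :
    Polynomial.derivative (Z A) = - ∑ u ∈ A, Z (A.filter (fun g => Disjoint g u)) := by
  classical
  rw [Z, map_sum]
  have hstep : ∀ M ∈ matchings A,
      Polynomial.derivative (Polynomial.C ((-1:ℝ) ^ M.card) * Polynomial.X ^ M.card)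
        = ∑ u ∈ A, if u ∈ M then Polynomial.C ((-1:ℝ) ^ M.card) * Polynomial.X ^ (M.card - 1)
            else 0 := by
    intro M hM
    rw [Finset.sum_ite_mem, Finset.sum_const]
    have hAM : A ∩ M = M := Finset.inter_eq_right.2 (mem_matchings.1 hM).1
    rw [hAM]
    rw [Polynomial.derivative_C_mul, Polynomial.derivative_X_pow]
    rw [nsmul_eq_mul, Polynomial.C_eq_natCast]
    ring
  rw [Finset.sum_congr rfl hstep, Finset.sum_comm]
  rw [← Finset.sum_neg_distrib]
  apply Finset.sum_congr rfl
  intro u hu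
  rw [← Finset.sum_filter]
  rw [sum_matchings_mem hu (hne u hu)
    (fun c => Polynomial.C ((-1:ℝ) ^ c) * Polynomial.X ^ (c - 1))]
  rw [Z, ← Finset.sum_neg_distrib]
  apply Finset.sum_congr rfl
  intro M hM
  simp only [Nat.add_sub_cancel, pow_succ, map_mul, Polynomial.C_neg, Polynomial.C_1]
  ring

lemma Z_split {B C : Finset (Finset γ)} (hBC : Disjoint B C)
    (hcross : ∀ b ∈ B, ∀ c ∈ C, Disjoint b c) :
    Z (B ∪ C) = Z B * Z C := by
  classical
  rw [Z, Z, Z, Finset.sum_mul_sum, ← Finset.sum_product']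
  apply Finset.sum_nbij' (fun M => (M ∩ B, M ∩ C)) (fun P => P.1 ∪ P.2)
  · intro M hM
    have hMm := mem_matchings.1 hM
    rw [Finset.mem_product]
    constructor <;> rw [mem_matchings]
    · exact ⟨Finset.inter_subset_right, isHyperMatching_subset hMm.2 Finset.inter_subset_left⟩
    · exact ⟨Finset.inter_subset_right, isHyperMatching_subset hMm.2 Finset.inter_subset_left⟩
  · intro P hP
    rw [Finset.mem_product] at hP
    have h1 := mem_matchings.1 hP.1
    have h2 := mem_matchings.1 hP.2
    rw [mem_matchings]
    constructor
    · exact Finset.union_subset (h1.1.trans Finset.subset_union_left)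
        (h2.1.trans Finset.subset_union_right)
    · intro e he f hf hef
      rcases Finset.mem_union.1 he with he1 | he2 <;> rcases Finset.mem_union.1 hf with hf1 | hf2
      · exact h1.2 e he1 f hf1 hef
      · exact hcross e (h1.1 he1) f (h2.1 hf2)
      · exact (hcross f (h1.1 hf1) e (h2.1 he2)).symm
      · exact h2.2 e he2 f hf2 hef
  · intro M hM
    have hMm := mem_matchings.1 hM
    rw [← Finset.inter_union_distrib_left]
    exact Finset.inter_eq_left.2 hMm.1
  · intro P hP
    rw [Finset.mem_product] at hP
    have h1 := (mem_matchings.1 hP.1).1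
    have h2 := (mem_matchings.1 hP.2).1
    have d1 : P.2 ∩ B = ∅ :=
      Finset.disjoint_iff_inter_eq_empty.1 (hBC.symm.mono h2 le_rfl)
    have d2 : P.1 ∩ C = ∅ :=
      Finset.disjoint_iff_inter_eq_empty.1 (hBC.mono h1 le_rfl)
    have e1 : (P.1 ∪ P.2) ∩ B = P.1 := by
      rw [Finset.union_inter_distrib_right, Finset.inter_eq_left.2 h1, d1, Finset.union_empty]
    have e2 : (P.1 ∪ P.2) ∩ C = P.2 := by
      rw [Finset.union_inter_distrib_right, Finset.inter_eq_left.2 h2, d2, Finset.empty_union]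
    rw [Prod.ext_iff]
    exact ⟨e1, e2⟩
  · intro M hM
    have hMm := mem_matchings.1 hM
    have hd : Disjoint (M ∩ B) (M ∩ C) := hBC.mono Finset.inter_subset_right
      Finset.inter_subset_right
    have hcard : (M ∩ B).card + (M ∩ C).card = M.card := by
      rw [← Finset.card_union_of_disjoint hd, ← Finset.inter_union_distrib_left,
        Finset.inter_eq_left.2 hMm.1]
    simp only []
    rw [← hcard, pow_add, pow_add, map_mul]
    ring

def rel (A : Finset (Finset γ)) (e f : Finset γ) : Prop :=
  e ∈ A ∧ f ∈ A ∧ e ≠ f ∧ ¬ Disjoint e f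

def Conn (A : Finset (Finset γ)) : Prop :=
  A.Nonempty ∧ ∀ e ∈ A, ∀ f ∈ A, Relation.ReflTransGen (rel A) e f

lemma rel_symm {A : Finset (Finset γ)} : Symmetric (rel A) :=
  fun e f ⟨he, hf, hne, hd⟩ => ⟨hf, he, hne.symm, fun h => hd h.symm⟩

lemma rel_mono {A B : Finset (Finset γ)} (h : A ⊆ B) {e f : Finset γ} (hr : rel A e f) :
    rel B e f := ⟨h hr.1, h hr.2.1, hr.2.2.1, hr.2.2.2⟩

lemma rtg_mono {A B : Finset (Finset γ)} (h : A ⊆ B) {e f : Finset γ}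
    (hr : Relation.ReflTransGen (rel A) e f) : Relation.ReflTransGen (rel B) e f :=
  Relation.ReflTransGen.mono (fun _ _ hx => rel_mono h hx) _ _ hr

open Classical in
noncomputable def comp (A : Finset (Finset γ)) (x : Finset γ) : Finset (Finset γ) :=
  A.filter (fun y => Relation.ReflTransGen (rel A) x y)

lemma comp_subset {A : Finset (Finset γ)} {x : Finset γ} : comp A x ⊆ A := by
  classical
  intro y hy
  rw [comp, Finset.mem_filter] at hy
  exact hy.1

lemma mem_comp_self {A : Finset (Finset γ)} {x : Finset γ} (hx : x ∈ A) : x ∈ comp A x := by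
  classical
  rw [comp, Finset.mem_filter]
  exact ⟨hx, Relation.ReflTransGen.refl⟩

lemma comp_cross {A : Finset (Finset γ)} {x b c : Finset γ} (hb : b ∈ comp A x)
    (hc : c ∈ A) (hcn : c ∉ comp A x) : Disjoint b c := by
  classical
  by_contra hd
  have hbA : b ∈ A := comp_subset hb
  have hbc : b ≠ c := fun h => hcn (h ▸ hb)
  rw [comp, Finset.mem_filter] at hb
  exact hcn (by
    rw [comp, Finset.mem_filter]
    exact ⟨hc, hb.2.tail ⟨hbA, hc, hbc, hd⟩⟩)

lemma reach_in_comp {A : Finset (Finset γ)} {x y : Finset γ} (hx : x ∈ A)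
    (h : Relation.ReflTransGen (rel A) x y) :
    Relation.ReflTransGen (rel (comp A x)) x y := by
  classical
  induction h with
  | refl => exact Relation.ReflTransGen.refl
  | tail hxm hstep ih =>
    rename_i m m'
    have hm : m ∈ comp A x := by
      rw [comp, Finset.mem_filter]; exact ⟨hstep.1, hxm⟩
    have hm' : m' ∈ comp A x := by
      rw [comp, Finset.mem_filter]; exact ⟨hstep.2.1, hxm.tail hstep⟩
    exact ih.tail ⟨hm, hm', hstep.2.2.1, hstep.2.2.2⟩

lemma conn_comp {A : Finset (Finset γ)} {x : Finset γ} (hx : x ∈ A) : Conn (comp A x) := by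
  classical
  refine ⟨⟨x, mem_comp_self hx⟩, ?_⟩
  intro e he f hf
  have he' : Relation.ReflTransGen (rel (comp A x)) x e := by
    rw [comp, Finset.mem_filter] at he
    exact reach_in_comp hx he.2
  have hf' : Relation.ReflTransGen (rel (comp A x)) x f := by
    rw [comp, Finset.mem_filter] at hf
    exact reach_in_comp hx hf.2
  exact (((@Relation.ReflTransGen.symmetric _ _ ⟨fun _ _ h => rel_symm h⟩).symm _ _) he').trans hf'

lemma conn_insert {A : Finset (Finset γ)} {x a₀ : Finset γ} (hA : Conn A) (hxA : x ∉ A)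
    (ha₀ : a₀ ∈ A) (hd : ¬ Disjoint a₀ x) : Conn (insert x A) := by
  classical
  have hxne : a₀ ≠ x := fun h => hxA (h ▸ ha₀)
  have hreach : ∀ y ∈ insert x A, Relation.ReflTransGen (rel (insert x A)) y x := by
    intro y hy
    rcases Finset.mem_insert.1 hy with rfl | hyA
    · exact Relation.ReflTransGen.refl
    · have h1 : Relation.ReflTransGen (rel (insert x A)) y a₀ :=
        rtg_mono (Finset.subset_insert _ _) (hA.2 y hyA a₀ ha₀)
      exact h1.tail ⟨Finset.mem_insert_of_mem ha₀, Finset.mem_insert_self _ _, hxne, hd⟩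
  refine ⟨⟨x, Finset.mem_insert_self _ _⟩, ?_⟩
  intro e he f hf
  exact (hreach e he).trans
    (((@Relation.ReflTransGen.symmetric _ _ ⟨fun _ _ h => rel_symm h⟩).symm _ _) (hreach f hf))

lemma conn_singleton (f : Finset γ) : Conn ({f} : Finset (Finset γ)) := by
  refine ⟨⟨f, Finset.mem_singleton_self f⟩, ?_⟩
  intro e he g hg
  rw [Finset.mem_singleton] at he hg
  rw [he, hg]

lemma boundary {A C : Finset (Finset γ)} {a b : Finset γ}
    (h : Relation.ReflTransGen (rel A) a b) (ha : a ∈ C) (hb : b ∉ C) :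
    ∃ c ∈ C, ∃ x ∈ A, x ∉ C ∧ c ≠ x ∧ ¬ Disjoint c x := by
  classical
  induction h with
  | refl => exact absurd ha hb
  | tail hmid hstep ih =>
    rename_i m m'
    by_cases hm : m ∈ C
    · exact ⟨m, hm, m', hstep.2.1, hb, hstep.2.2.1, hstep.2.2.2⟩
    · exact ih hm

lemma compZero : ∀ (N : ℕ) (A : Finset (Finset γ)), A.card ≤ N → ∀ (w : ℝ),
    (Z A).eval w = 0 → ∃ C, C ⊆ A ∧ Conn C ∧ (Z C).eval w = 0 := by
  intro N
  induction N with
  | zero =>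
    intro A hA w hw
    have : A = ∅ := Finset.card_eq_zero.1 (Nat.le_zero.1 hA)
    rw [this, Z_empty] at hw
    simp at hw
  | succ N ih =>
    intro A hA w hw
    rcases A.eq_empty_or_nonempty with rfl | ⟨x, hx⟩
    · rw [Z_empty] at hw; simp at hw
    · have hcross' : ∀ b ∈ comp A x, ∀ c ∈ A \ comp A x, Disjoint b c := by
        intro b hb c hc
        rw [Finset.mem_sdiff] at hc
        exact comp_cross hb hc.1 hc.2
      have hdisj : Disjoint (comp A x) (A \ comp A x) := Finset.disjoint_sdiff
      have hunion : comp A x ∪ (A \ comp A x) = A := Finset.union_sdiff_of_subset comp_subset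
      have hsplit : Z A = Z (comp A x) * Z (A \ comp A x) := by
        conv_lhs => rw [← hunion]
        exact Z_split hdisj hcross'
      rw [hsplit, Polynomial.eval_mul] at hw
      rcases mul_eq_zero.1 hw with h1 | h2
      · exact ⟨comp A x, comp_subset, conn_comp hx, h1⟩
      · have hss : A \ comp A x ⊂ A :=
          Finset.sdiff_ssubset comp_subset ⟨x, mem_comp_self hx⟩
        have hcard : (A \ comp A x).card ≤ N := by
          have := Finset.card_lt_card hss
          omega
        obtain ⟨C, hC1, hC2, hC3⟩ := ih (A \ comp A x) hcard w h2
        exact ⟨C, hC1.trans Finset.sdiff_subset, hC2, hC3⟩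
lemma eval_nonneg_of_pos_before {p : Polynomial ℝ} {w : ℝ} (hw : 0 < w)
    (h : ∀ x, 0 ≤ x → x < w → 0 < p.eval x) : 0 ≤ p.eval w := by
  have htend : Filter.Tendsto (fun x => p.eval x) (nhdsWithin w (Set.Iio w)) (nhds (p.eval w)) :=
    p.continuous.continuousAt.tendsto.mono_left nhdsWithin_le_nhds
  refine ge_of_tendsto htend ?_
  filter_upwards [Ioo_mem_nhdsLT hw] with x hx
  exact (h x hx.1.le hx.2).le

lemma exists_first_root {p : Polynomial ℝ} {cap : ℝ} (hcap : 0 < cap)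
    (h0 : p.eval 0 = 1) (hbad : p.eval cap ≤ 0) :
    ∃ r, 0 < r ∧ r ≤ cap ∧ p.eval r = 0 ∧ ∀ x, 0 ≤ x → x < r → 0 < p.eval x := by
  set T : Set ℝ := {u | 0 ≤ u ∧ u ≤ cap ∧ p.eval u ≤ 0} with hT
  have hclosed : IsClosed T := by
    have : T = Set.Icc 0 cap ∩ (fun u => p.eval u) ⁻¹' Set.Iic 0 := by
      ext u; simp [hT, Set.mem_Icc, and_assoc]
    rw [this]
    exact isClosed_Icc.inter (isClosed_Iic.preimage p.continuous)
  have hne : T.Nonempty := ⟨cap, ⟨hcap.le, le_rfl, hbad⟩⟩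
  have hbdd : BddBelow T := ⟨0, fun u hu => hu.1⟩
  have hmem : sInf T ∈ T := hclosed.csInf_mem hne hbdd
  set r := sInf T with hr
  have hrpos : 0 < r := by
    rcases lt_or_eq_of_le hmem.1 with h | h
    · exact h
    · exfalso
      have h2 := hmem.2.2
      rw [← h] at h2
      rw [h0] at h2
      linarith
  have hpos : ∀ x, 0 ≤ x → x < r → 0 < p.eval x := by
    intro x hx0 hxr
    by_contra hcon
    push_neg at hcon
    have : x ∈ T := ⟨hx0, hxr.le.trans hmem.2.1, hcon⟩
    exact absurd (csInf_le hbdd this) (not_le.2 hxr)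
  refine ⟨r, hrpos, hmem.2.1, ?_, hpos⟩
  rcases lt_or_eq_of_le hmem.2.2 with hlt | heq
  · exfalso
    obtain ⟨u, hu, hu0⟩ := intermediate_value_Ioo' (le_of_lt hrpos) p.continuous.continuousOn
      (by rw [h0]; exact Set.mem_Ioo.2 ⟨hlt, one_pos⟩)
    exact absurd hu0 (ne_of_gt (hpos u hu.1.le hu.2))
  · exact heq

lemma firstmin (A : Finset (Finset γ)) (hne : ∀ f ∈ A, f.Nonempty) (cap : ℝ) (hcap : 0 < cap)
    (B₀ : Finset (Finset γ)) (hB₀A : B₀ ⊆ A) (hB₀ : (Z B₀).eval cap ≤ 0) :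
    ∃ w₁, 0 < w₁ ∧ w₁ ≤ cap ∧ (Z A).eval w₁ = 0 ∧
      ∀ C ⊆ A, ∀ u : ℝ, 0 ≤ u → u < w₁ → 0 < (Z C).eval u := by
  classical
  -- for each subset B with a "bad point" in (0, cap], take its first root
  set P : Finset (Finset (Finset γ)) :=
    A.powerset.filter (fun B => ∃ u : ℝ, 0 < u ∧ u ≤ cap ∧ (Z B).eval u ≤ 0) with hP
  have hB₀P : B₀ ∈ P := by
    rw [hP, Finset.mem_filter, Finset.mem_powerset]
    exact ⟨hB₀A, cap, hcap, le_rfl, hB₀⟩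
  have hPprop : ∀ B ∈ P, ∃ r, 0 < r ∧ r ≤ cap ∧ (Z B).eval r = 0 ∧
      ∀ x, 0 ≤ x → x < r → 0 < (Z B).eval x := by
    intro B hB
    rw [hP, Finset.mem_filter] at hB
    obtain ⟨u, hu0, hucap, hub⟩ := hB.2
    obtain ⟨r, h1, h2, h3, h4⟩ := exists_first_root hu0 (Z_eval_zero B) hub
    exact ⟨r, h1, h2.trans hucap, h3, h4⟩
  choose rB hr1 hr2 hr3 hr4 using hPprop
  -- minimum of the first roots
  have hPne : P.Nonempty := ⟨B₀, hB₀P⟩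
  obtain ⟨B₁, hB₁, hB₁min⟩ := Finset.exists_min_image P (fun B => if h : B ∈ P then rB B h else cap)
    hPne
  set w₁ := rB B₁ hB₁ with hw₁def
  have hw₁pos : 0 < w₁ := hr1 B₁ hB₁
  have hw₁cap : w₁ ≤ cap := hr2 B₁ hB₁
  have hmin : ∀ B, (h : B ∈ P) → w₁ ≤ rB B h := by
    intro B h
    have := hB₁min B h
    rwa [dif_pos hB₁, dif_pos h] at this
  have hglobal : ∀ C ⊆ A, ∀ u : ℝ, 0 ≤ u → u < w₁ → 0 < (Z C).eval u := by
    intro C hC u hu0 huw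
    by_contra hcon
    push_neg at hcon
    have hu0' : 0 < u := by
      rcases lt_or_eq_of_le hu0 with h | h
      · exact h
      · exfalso; rw [← h, Z_eval_zero] at hcon; linarith
    have hCP : C ∈ P := by
      rw [hP, Finset.mem_filter, Finset.mem_powerset]
      exact ⟨hC, u, hu0', (huw.le.trans hw₁cap), hcon⟩
    have hle : rB C hCP ≤ u := by
      by_contra hgt
      push_neg at hgt
      exact absurd (hr4 C hCP u hu0 hgt) (not_lt.2 hcon)
    exact absurd ((hmin C hCP).trans hle) (not_le.2 huw)
  have hnonneg : ∀ C ⊆ A, 0 ≤ (Z C).eval w₁ := fun C hC =>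
    eval_nonneg_of_pos_before hw₁pos (hglobal C hC)
  have grow : ∀ (d : ℕ) (B : Finset (Finset γ)), B ⊆ A → A.card ≤ B.card + d →
      (Z B).eval w₁ = 0 → (Z A).eval w₁ = 0 := by
    intro d
    induction d with
    | zero =>
      intro B hBA hcard hB
      have hBeq : B = A := Finset.eq_of_subset_of_card_le hBA (by omega)
      rw [← hBeq]; exact hB
    | succ d ihd =>
      intro B hBA hcard hBzero
      by_cases hBA' : B = A
      · rw [← hBA']; exact hBzero
      · obtain ⟨u, huA, huB⟩ := Finset.exists_of_ssubset (Finset.ssubset_iff_subset_ne.2 ⟨hBA, hBA'⟩)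
        have hB'A : insert u B ⊆ A := Finset.insert_subset huA hBA
        have hdel := Z_deletion (Finset.mem_insert_self u B) (hne u huA)
        rw [Finset.erase_insert huB] at hdel
        have hfsub : (insert u B).filter (fun g => Disjoint g u) ⊆ A :=
          (Finset.filter_subset _ _).trans hB'A
        have heval : (Z (insert u B)).eval w₁ =
            - (w₁ * (Z ((insert u B).filter (fun g => Disjoint g u))).eval w₁) := by
          rw [hdel]
          simp [hBzero]
        have h1 : (Z (insert u B)).eval w₁ ≤ 0 := by
          rw [heval]
          have := hnonneg _ hfsub
          nlinarith
        have hzero : (Z (insert u B)).eval w₁ = 0 := le_antisymm h1 (hnonneg _ hB'A)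
        exact ihd (insert u B) hB'A (by rw [Finset.card_insert_of_notMem huB]; omega) hzero
  have hB₁A : B₁ ⊆ A := by
    have := hB₁
    rw [hP, Finset.mem_filter, Finset.mem_powerset] at this
    exact this.1
  exact ⟨w₁, hw₁pos, hw₁cap, grow A.card B₁ hB₁A (by omega) (hr3 B₁ hB₁), hglobal⟩

lemma key : ∀ (n : ℕ) (A : Finset (Finset γ)), A.card ≤ n → (∀ f ∈ A, f.Nonempty) → Conn A →
    ∀ u ∈ A, ∀ w : ℝ, 0 < w → (Z A).eval w = 0 →
    (∀ x, 0 ≤ x → x < w → 0 < (Z A).eval x) →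
    0 < (Z (A.erase u)).eval w := by
  intro n
  induction n with
  | zero =>
    intro A hcard hne hconn u hu w hw hzero hpos
    rw [Finset.card_eq_zero.1 (Nat.le_zero.1 hcard)] at hu
    exact absurd hu (Finset.notMem_empty u)
  | succ n ih =>
    intro A hcard hne hconn u hu w hw hzero hpos
    -- Shearer: all subsets positive before w, nonneg at w
    obtain ⟨w₁, hw₁pos, hw₁le, hw₁zero, hglobal⟩ :=
      firstmin A hne w hw A (le_refl A) (le_of_eq hzero)
    have hw₁w : w₁ = w := by
      rcases lt_or_eq_of_le hw₁le with h | h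
      · exfalso
        have := hpos w₁ hw₁pos.le h
        rw [hw₁zero] at this
        exact lt_irrefl 0 this
      · exact h
    rw [hw₁w] at hglobal
    have hnonneg : ∀ C ⊆ A, 0 ≤ (Z C).eval w := fun C hC =>
      eval_nonneg_of_pos_before hw (hglobal C hC)
    -- suppose Z (A.erase u) w = 0
    rcases lt_or_eq_of_le (hnonneg (A.erase u) (Finset.erase_subset _ _)) with h | h
    · exact h
    exfalso
    have h0 : (Z (A.erase u)).eval w = 0 := h.symm
    have hdel := Z_deletion hu (hne u hu)
    have hAu : (Z (A.filter (fun g => Disjoint g u))).eval w = 0 := by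
      have h1 := hzero
      rw [hdel] at h1
      simp only [Polynomial.eval_sub, Polynomial.eval_mul, Polynomial.eval_X, h0] at h1
      have h2 : w * (Z (A.filter (fun g => Disjoint g u))).eval w = 0 := by linarith
      rcases mul_eq_zero.1 h2 with h' | h'
      · exact absurd h' hw.ne'
      · exact h'
    obtain ⟨C, hCAu, hCconn, hCzero⟩ := compZero (A.filter (fun g => Disjoint g u)).card
      (A.filter (fun g => Disjoint g u)) le_rfl w hAu
    obtain ⟨c₀, hc₀⟩ := hCconn.1
    have hCA : C ⊆ A := hCAu.trans (Finset.filter_subset _ _)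
    have hCdisj : ∀ c ∈ C, Disjoint c u := fun c hc => (Finset.mem_filter.1 (hCAu hc)).2
    have huC : u ∉ C := fun h => (hne u hu).ne_empty (by
      simpa using disjoint_self.1 (hCdisj u h))
    -- boundary edge
    obtain ⟨c, hcC, x, hxA, hxC, hcx, hcxd⟩ := boundary (hconn.2 c₀ (hCA hc₀) u hu) hc₀ huC
    have hxu : x ≠ u := by
      intro hxu
      rw [hxu] at hcxd
      exact hcxd (hCdisj c hcC)
    -- A' = insert x C
    have hA'sub : insert x C ⊆ A := Finset.insert_subset hxA hCA
    have hA'card : (insert x C).card ≤ n := by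
      have hsub : insert x C ⊆ A.erase u := by
        intro y hy
        rcases Finset.mem_insert.1 hy with rfl | hyC
        · exact Finset.mem_erase.2 ⟨hxu, hxA⟩
        · exact Finset.mem_erase.2 ⟨fun hh => huC (hh ▸ hyC), hCA hyC⟩
      have := Finset.card_le_card hsub
      rw [Finset.card_erase_of_mem hu] at this
      omega
    have hA'conn : Conn (insert x C) := conn_insert hCconn hxC hcC hcxd
    -- Z (insert x C) eval w = 0
    have hdel' := Z_deletion (Finset.mem_insert_self x C) (hne x hxA)
    rw [Finset.erase_insert hxC] at hdel'
    have hfsub : (insert x C).filter (fun g => Disjoint g x) ⊆ A :=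
      (Finset.filter_subset _ _).trans hA'sub
    have hA'le : (Z (insert x C)).eval w ≤ 0 := by
      rw [hdel']
      simp only [Polynomial.eval_sub, Polynomial.eval_mul, Polynomial.eval_X, hCzero]
      have := hnonneg _ hfsub
      nlinarith
    have hA'zero : (Z (insert x C)).eval w = 0 :=
      le_antisymm hA'le (hnonneg _ hA'sub)
    have hA'pos : ∀ y, 0 ≤ y → y < w → 0 < (Z (insert x C)).eval y := hglobal _ hA'sub
    have := ih (insert x C) hA'card (fun f hf => hne f (hA'sub hf)) hA'conn x
      (Finset.mem_insert_self x C) w hw hA'zero hA'pos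
    rw [Finset.erase_insert hxC] at this
    exact absurd hCzero (ne_of_gt this)

lemma tree_edges {k : ℕ} {V : Finset γ} {E : Finset (Finset γ)} (hT : IsHypertree k V E) :
    ∀ f ∈ E, f ⊆ V ∧ f.card = k := by
  induction hT with
  | single v => intro f hf; exact absurd hf (Finset.notMem_empty f)
  | attach e hT' hcard hint ih =>
    intro f hf
    rcases Finset.mem_insert.1 hf with rfl | hf
    · exact ⟨Finset.subset_union_right, hcard⟩
    · exact ⟨(ih f hf).1.trans Finset.subset_union_left, (ih f hf).2⟩

lemma tree_E_empty_aux {k : ℕ} {V : Finset γ} {E : Finset (Finset γ)}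
    (hT : IsHypertree k V E) : E = ∅ → ∃ v, V = {v} := by
  induction hT with
  | single v => intro _; exact ⟨v, rfl⟩
  | attach e hT' hcard hint ih => intro h; exact absurd h (Finset.insert_ne_empty _ _)

lemma tree_E_empty {k : ℕ} {V : Finset γ} (hT : IsHypertree k V ∅) : ∃ v, V = {v} :=
  tree_E_empty_aux hT rfl

lemma tree_vertex_edge {k : ℕ} {V : Finset γ} {E : Finset (Finset γ)}
    (hT : IsHypertree k V E) : E.Nonempty → ∀ v ∈ V, ∃ f ∈ E, v ∈ f := by
  induction hT with
  | single v => intro h; exact absurd h (by simp)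
  | attach e hT' hcard hint ih =>
    rename_i V' E'
    intro hne v hv
    rcases Finset.mem_union.1 hv with hv' | hve
    · rcases E'.eq_empty_or_nonempty with hE' | hE'
      · subst hE'
        obtain ⟨v₀, hv₀⟩ := tree_E_empty hT'
        obtain ⟨w, hw⟩ := Finset.card_eq_one.1 hint
        have hwv : w ∈ e ∩ V' := hw ▸ Finset.mem_singleton_self w
        have hwe := Finset.mem_of_mem_inter_left hwv
        have hwV := Finset.mem_of_mem_inter_right hwv
        rw [hv₀, Finset.mem_singleton] at hwV hv'
        refine ⟨e, Finset.mem_insert_self _ _, ?_⟩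
        rw [hv', ← hwV]
        exact hwe
      · obtain ⟨f, hf, hvf⟩ := ih hE' v hv'
        exact ⟨f, Finset.mem_insert_of_mem hf, hvf⟩
    · exact ⟨e, Finset.mem_insert_self _ _, hve⟩

lemma tree_conn {k : ℕ} {V : Finset γ} {E : Finset (Finset γ)} (hT : IsHypertree k V E)
    (hk : 2 ≤ k) : E.Nonempty → Conn E := by
  induction hT with
  | single v => intro h; exact absurd h (by simp)
  | attach e hT' hcard hint ih =>
    rename_i V' E'
    intro _
    have heE' : e ∉ E' := by
      intro he
      have := (tree_edges hT' e he).1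
      have : e ∩ V' = e := Finset.inter_eq_left.2 this
      rw [this] at hint
      omega
    rcases E'.eq_empty_or_nonempty with hE' | hE'
    · subst hE'
      have : insert e (∅ : Finset (Finset γ)) = {e} := rfl
      rw [this]
      exact conn_singleton e
    · obtain ⟨w, hw⟩ := Finset.card_eq_one.1 hint
      have hwv : w ∈ e ∩ V' := hw ▸ Finset.mem_singleton_self w
      have hwe := Finset.mem_of_mem_inter_left hwv
      have hwV := Finset.mem_of_mem_inter_right hwv
      obtain ⟨f₀, hf₀, hwf₀⟩ := tree_vertex_edge hT' hE' w hwV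
      have hnd : ¬ Disjoint f₀ e := fun hd =>
        (Finset.disjoint_left.1 hd hwf₀) hwe
      exact conn_insert (ih hE') heE' hf₀ hnd

lemma tree_matching_bound {k : ℕ} {V : Finset γ} {E : Finset (Finset γ)}
    (hT : IsHypertree k V E) : ∀ M ∈ matchings E, M.card * k ≤ V.card := by
  intro M hM
  have hMm := mem_matchings.1 hM
  have hsub : M.biUnion id ⊆ V := by
    intro v hv
    obtain ⟨f, hf, hvf⟩ := Finset.mem_biUnion.1 hv
    exact (tree_edges hT f (hMm.1 hf)).1 hvf
  have hcard : (M.biUnion id).card = M.card * k := by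
    have h1 : (M.biUnion id).card = ∑ u ∈ M, (id u).card :=
      Finset.card_biUnion (fun x hx y hy hxy => hMm.2 x hx y hy hxy)
    have h2 : ∀ f ∈ M, (id f).card = k := fun f hf => (tree_edges hT f (hMm.1 hf)).2
    rw [h1, Finset.sum_congr rfl h2, Finset.sum_const, smul_eq_mul]
  calc M.card * k = (M.biUnion id).card := hcard.symm
    _ ≤ V.card := Finset.card_le_card hsub

lemma sum_mcount (E : Finset (Finset γ)) (F : ℕ → ℝ) :
    ∑ t ∈ Finset.range (E.card + 1), (mCount E t : ℝ) * F t
      = ∑ M ∈ matchings E, F M.card := by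
  classical
  have hmaps : ∀ M ∈ matchings E, M.card ∈ Finset.range (E.card + 1) := by
    intro M hM
    rw [Finset.mem_range, Nat.lt_succ_iff]
    exact Finset.card_le_card (mem_matchings.1 hM).1
  rw [← Finset.sum_fiberwise_of_maps_to hmaps (fun M => F M.card)]
  apply Finset.sum_congr rfl
  intro t ht
  have hfil : ((matchings E).filter (fun M => M.card = t)).card = mCount E t := by
    rw [mCount]
    congr 1
    apply Finset.ext
    intro M
    simp only [Finset.mem_filter, mem_matchings, Finset.mem_powerset]
    tauto
  rw [Finset.sum_congr rfl (fun M hM => by rw [(Finset.mem_filter.1 hM).2] :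
    ∀ M ∈ (matchings E).filter (fun M => M.card = t), F M.card = F t)]
  rw [Finset.sum_const, nsmul_eq_mul, hfil]

lemma pow_sub_helper {x : ℝ} (hx : 0 < x) {a b : ℕ} (h : b ≤ a) :
    x ^ (a - b) = x ^ a * (x ^ b)⁻¹ := by
  have hxb : x ^ b ≠ 0 := pow_ne_zero _ hx.ne'
  field_simp
  rw [← pow_add, Nat.sub_add_cancel h]

lemma xpow_helper {x : ℝ} {e : ℕ} : x * ((e:ℝ) * x ^ (e - 1)) = (e:ℝ) * x ^ e := by
  cases e with
  | zero => simp
  | succ e =>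
    rw [Nat.add_sub_cancel, pow_succ]
    push_cast
    ring

lemma mPoly_eval {n k : ℕ} {E : Finset (Finset γ)} (hb : ∀ M ∈ matchings E, M.card * k ≤ n)
    {x : ℝ} (hx : 0 < x) :
    (mPolynomial n k E).eval x = x ^ n * (Z E).eval ((x ^ k)⁻¹) := by
  rw [mPolynomial, Polynomial.eval_finset_sum]
  simp only [Polynomial.eval_mul, Polynomial.eval_C, Polynomial.eval_pow, Polynomial.eval_X]
  have hre : ∀ t ∈ Finset.range (E.card + 1),
      (-1:ℝ)^t * (mCount E t : ℝ) * x ^ (n - t*k)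
        = (mCount E t : ℝ) * ((-1:ℝ)^t * x ^ (n - t*k)) := fun t ht => by ring
  rw [Finset.sum_congr rfl hre, sum_mcount E (fun t => (-1:ℝ)^t * x ^ (n - t*k))]
  rw [Z_eval, Finset.mul_sum]
  apply Finset.sum_congr rfl
  intro M hM
  have hle := hb M hM
  rw [pow_sub_helper hx hle,
    show ((x ^ k)⁻¹) ^ M.card = (x ^ (M.card * k))⁻¹ by rw [inv_pow, ← pow_mul, mul_comm k M.card]]
  ring

lemma Z_deriv_eval (E : Finset (Finset γ)) (w : ℝ) :
    (Polynomial.derivative (Z E)).eval w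
      = ∑ M ∈ matchings E, (-1:ℝ)^M.card * (M.card : ℝ) * w ^ (M.card - 1) := by
  rw [Z, map_sum, Polynomial.eval_finset_sum]
  apply Finset.sum_congr rfl
  intro M hM
  rw [Polynomial.derivative_C_mul, Polynomial.derivative_X_pow]
  simp only [Polynomial.eval_mul, Polynomial.eval_C, Polynomial.C_eq_natCast,
    Polynomial.eval_natCast, Polynomial.eval_pow, Polynomial.eval_X]
  ring

lemma mPoly_deriv_eval {n k : ℕ} {E : Finset (Finset γ)}
    (hb : ∀ M ∈ matchings E, M.card * k ≤ n) {x : ℝ} (hx : 0 < x) :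
    x * (Polynomial.derivative (mPolynomial n k E)).eval x
      = (n:ℝ) * (mPolynomial n k E).eval x
        - (k:ℝ) * x ^ n * (x ^ k)⁻¹ * (Polynomial.derivative (Z E)).eval ((x ^ k)⁻¹) := by
  have hD : (Polynomial.derivative (mPolynomial n k E)).eval x
      = ∑ t ∈ Finset.range (E.card + 1),
          (mCount E t : ℝ) * ((-1:ℝ)^t * (((n - t*k : ℕ)):ℝ) * x ^ (n - t*k - 1)) := by
    rw [mPolynomial, map_sum, Polynomial.eval_finset_sum]
    apply Finset.sum_congr rfl
    intro t ht
    rw [Polynomial.derivative_C_mul, Polynomial.derivative_X_pow]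
    simp only [Polynomial.eval_mul, Polynomial.eval_C, Polynomial.C_eq_natCast,
      Polynomial.eval_natCast, Polynomial.eval_pow, Polynomial.eval_X]
    ring
  rw [hD, sum_mcount E (fun t => (-1:ℝ)^t * (((n - t*k : ℕ)):ℝ) * x ^ (n - t*k - 1))]
  rw [mPoly_eval hb hx, Z_eval, Z_deriv_eval]
  set w := (x ^ k)⁻¹ with hwdef
  rw [Finset.mul_sum, Finset.mul_sum, Finset.mul_sum, Finset.mul_sum, ← Finset.sum_sub_distrib]
  apply Finset.sum_congr rfl
  intro M hM
  have hle := hb M hM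
  have hcast : (((n - M.card*k : ℕ)):ℝ) = (n:ℝ) - (M.card:ℝ) * (k:ℝ) := by
    rw [Nat.cast_sub hle]
    push_cast
    ring
  have hxp : x ^ (n - M.card*k) = x ^ n * w ^ M.card := by
    rw [pow_sub_helper hx hle, hwdef,
      show ((x ^ k)⁻¹) ^ M.card = (x ^ (M.card * k))⁻¹ by
        rw [inv_pow, ← pow_mul, mul_comm k M.card]]
  rw [show x * ((-1:ℝ) ^ M.card * (((n - M.card * k : ℕ)):ℝ) * x ^ (n - M.card * k - 1))
      = (-1:ℝ) ^ M.card * (x * ((((n - M.card * k : ℕ)):ℝ) * x ^ (n - M.card * k - 1))) from by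
        ring,
    xpow_helper, hcast, hxp,
    show ((k:ℝ)) * x ^ n * w * ((-1:ℝ) ^ M.card * ((M.card:ℝ)) * w ^ (M.card - 1))
      = ((k:ℝ)) * x ^ n * ((-1:ℝ) ^ M.card * (w * (((M.card:ℝ)) * w ^ (M.card - 1)))) from by
        ring,
    xpow_helper]
  ring

end Stmt13Aux

open Stmt13Aux

/-- Let `T` be a `k`-uniform hypertree with `k ≥ 3` and at least one edge, and let `ρ` be
the largest real root of its matching polynomial `φ_T`. Then `ρ` is a simple root of
`φ_T`: `φ_T(ρ) = 0` and `φ_T'(ρ) ≠ 0`. -/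
theorem stmt13 {α : Type*} [DecidableEq α] (k : ℕ) (hk : 3 ≤ k)
    (V : Finset α) (E : Finset (Finset α)) (hT : IsHypertree k V E) (hE : E.Nonempty)
    (ρ : ℝ) (hroot : (mPolynomial V.card k E).IsRoot ρ)
    (hmax : ∀ x : ℝ, (mPolynomial V.card k E).IsRoot x → x ≤ ρ) :
    (mPolynomial V.card k E).eval ρ = 0
    ∧ ((mPolynomial V.card k E).derivative).eval ρ ≠ 0 := by

  classical
  have hphi : (mPolynomial V.card k E).eval ρ = 0 := hroot
  have hb : ∀ M ∈ matchings E, M.card * k ≤ V.card := tree_matching_bound hT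
  have hne : ∀ f ∈ E, f.Nonempty := by
    intro f hf
    rw [← Finset.card_pos, (tree_edges hT f hf).2]
    omega
  obtain ⟨f₀, hf₀⟩ := hE
  have hZf₀ : (Z {f₀}).eval 1 ≤ 0 := by
    rw [Z_eval]
    have hm : matchings ({f₀} : Finset (Finset α)) = {∅, {f₀}} := by
      apply Finset.ext
      intro M
      simp only [mem_matchings, Finset.subset_singleton_iff, Finset.mem_insert,
        Finset.mem_singleton]
      constructor
      · rintro ⟨h | h, _⟩
        · left; exact h
        · right; exact h
      · rintro (rfl | rfl)
        · exact ⟨Or.inl rfl, fun e he => absurd he (Finset.notMem_empty _)⟩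
        · refine ⟨Or.inr rfl, ?_⟩
          intro e he f hf hef
          rw [Finset.mem_singleton] at he hf
          exact absurd (he.trans hf.symm) hef
      -- done
    rw [hm]
    rw [Finset.sum_insert (by
      simp only [Finset.mem_singleton]
      exact fun h => (Finset.singleton_ne_empty f₀) h.symm)]
    simp
  obtain ⟨w₁, hw₁pos, hw₁le1, hw₁zero, hglobal⟩ :=
    firstmin E hne 1 one_pos {f₀} (Finset.singleton_subset_iff.2 hf₀) hZf₀
  have hk0 : (k:ℝ) ≠ 0 := Nat.cast_ne_zero.2 (by omega)
  set x₀ : ℝ := (w₁⁻¹) ^ ((k:ℝ)⁻¹) with hx₀def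
  have hx₀pos : 0 < x₀ := Real.rpow_pos_of_pos (inv_pos.2 hw₁pos) _
  have hx₀k : x₀ ^ k = w₁⁻¹ := by
    rw [hx₀def, ← Real.rpow_natCast ((w₁⁻¹) ^ ((k:ℝ)⁻¹)) k,
      ← Real.rpow_mul (inv_pos.2 hw₁pos).le, inv_mul_cancel₀ hk0, Real.rpow_one]
  have hw₁x : (x₀ ^ k)⁻¹ = w₁ := by rw [hx₀k, inv_inv]
  have hφx₀ : (mPolynomial V.card k E).eval x₀ = 0 := by
    rw [mPoly_eval hb hx₀pos, hw₁x, hw₁zero, mul_zero]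
  have hρx₀ : x₀ ≤ ρ := hmax x₀ hφx₀
  have hρpos : 0 < ρ := lt_of_lt_of_le hx₀pos hρx₀
  have hρeq : ρ = x₀ := by
    by_contra hne'
    have hlt : x₀ < ρ := lt_of_le_of_ne hρx₀ (Ne.symm hne')
    have hkpow : x₀ ^ k < ρ ^ k := pow_lt_pow_left₀ hlt hx₀pos.le (by omega)
    have hwρlt : (ρ ^ k)⁻¹ < w₁ := by
      rw [← hw₁x]
      exact inv_strictAnti₀ (pow_pos hx₀pos k) hkpow
    have hZpos : 0 < (Z E).eval ((ρ ^ k)⁻¹) :=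
      hglobal E (le_refl E) _ (inv_pos.2 (pow_pos hρpos k)).le hwρlt
    have : 0 < (mPolynomial V.card k E).eval ρ := by
      rw [mPoly_eval hb hρpos]
      exact mul_pos (pow_pos hρpos _) hZpos
    rw [hphi] at this
    exact lt_irrefl 0 this
  have hwρ : (ρ ^ k)⁻¹ = w₁ := by rw [hρeq]; exact hw₁x
  refine ⟨hphi, ?_⟩
  have hnonneg : ∀ C ⊆ E, 0 ≤ (Z C).eval w₁ := fun C hC =>
    eval_nonneg_of_pos_before hw₁pos (hglobal C hC)
  have hconn : Conn E := tree_conn hT (by omega) ⟨f₀, hf₀⟩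
  have hkey : 0 < (Z (E.erase f₀)).eval w₁ :=
    key E.card E le_rfl hne hconn f₀ hf₀ w₁ hw₁pos hw₁zero (hglobal E (le_refl E))
  have hdel := Z_deletion hf₀ (hne f₀ hf₀)
  have hDf₀ : 0 < (Z (E.filter (fun g => Disjoint g f₀))).eval w₁ := by
    have h1 := hw₁zero
    rw [hdel] at h1
    simp only [Polynomial.eval_sub, Polynomial.eval_mul, Polynomial.eval_X] at h1
    by_contra hcon
    push_neg at hcon
    have : w₁ * (Z (E.filter (fun g => Disjoint g f₀))).eval w₁ ≤ 0 :=
      mul_nonpos_of_nonneg_of_nonpos hw₁pos.le hcon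
    linarith
  have hZdneg : (Polynomial.derivative (Z E)).eval w₁ < 0 := by
    rw [Z_derivative hne]
    simp only [Polynomial.eval_neg, Polynomial.eval_finset_sum]
    have hterm : ∀ u ∈ E, 0 ≤ (Z (E.filter (fun g => Disjoint g u))).eval w₁ :=
      fun u hu => hnonneg _ (Finset.filter_subset _ _)
    have hsum := Finset.single_le_sum hterm hf₀
    have : 0 < ∑ u ∈ E, (Z (E.filter (fun g => Disjoint g u))).eval w₁ :=
      lt_of_lt_of_le hDf₀ hsum
    linarith
  have hder := mPoly_deriv_eval hb hρpos (n := V.card) (k := k) (E := E)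
  rw [hphi, mul_zero, hwρ] at hder
  intro hcon
  rw [hcon, mul_zero] at hder
  have hk3 : (3:ℝ) ≤ (k:ℝ) := by exact_mod_cast hk
  have hpow : 0 < ρ ^ V.card := pow_pos hρpos _
  nlinarith [mul_pos (mul_pos (mul_pos (by linarith : (0:ℝ) < (k:ℝ)) hpow) hw₁pos)
    (neg_pos.2 hZdneg)]
end
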